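/- arXiv:math/9802026 — 14 statements merged into one kernel-verified Lean document; each statement's English description precedes it below -/
import Mathlib

section
/- (Cycle Lemma, Dvoretzky–Motzkin) Let k, q, p be nonnegative integers and let a be a (k, qk+p)-arrangement, i.e. a cyclic sequence of length n = (q+1)k + p with exactly k entries equal to 1 and qk+p entries equal to 0. Then exactly p of the n positions r ∈ ℤ/nℤ are such that the linearization a_{r+1}, a_{r+2}, …, a_{r+n} (indices mod n) is a q-dominating sequence. -/
/-- A sequence of 0's (`false`) and 1's (`true`) is `q`-dominating if in every
nonempty prefix the number of 0's strictly exceeds `q` times the number of 1's. -/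
def QDominating (q : ℕ) (l : List Bool) : Prop :=
  ∀ m : ℕ, 1 ≤ m → m ≤ l.length →
    q * (l.take m).count true < (l.take m).count false

/-- The linearization of a cyclic arrangement `a : ZMod n → Bool` ending at
position `r`: the linear sequence `a (r+1), a (r+2), …, a (r+n)`. -/
def linearization {n : ℕ} (a : ZMod n → Bool) (r : ZMod n) : List Bool :=
  (List.range n).map (fun j => a (r + ((j + 1 : ℕ) : ZMod n)))

/-! Give a `0` the weight `1` and a `1` the weight `-q`, and let `S t` be the sum of the first
`t` weights along the periodically extended arrangement, so that `S (t + n) = S t + p`. The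
linearization starting after position `t` is `q`-dominating iff `S t < S (t + m)` for
`1 ≤ m ≤ n`. Since every weight is at most `1`, the minimum of `S` over the window
`[t, t + n)` goes up by exactly one when `t` has this property and stays put otherwise; over a
full period it goes up by `p`, so exactly `p` of the `n` positions qualify. -/

namespace CycleLemma

open Finset

section WindowMin

variable (S : ℕ → ℤ) (n : ℕ)

def IsStrictMinAhead (t : ℕ) : Prop :=
  ∀ m, 1 ≤ m → m ≤ n → S t < S (t + m)

variable [NeZero n]

def windowMin (t : ℕ) : ℤ :=
  (range n).inf' (nonempty_range_iff.mpr (NeZero.ne n)) fun j => S (t + j)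

variable {S n}

lemma windowMin_le {t j : ℕ} (hj : j < n) : windowMin S n t ≤ S (t + j) :=
  inf'_le _ (mem_range.mpr hj)

lemma windowMin_le_self (t : ℕ) : windowMin S n t ≤ S t := by
  simpa using windowMin_le (S := S) (t := t) (Nat.pos_of_neZero n)

lemma le_windowMin {t : ℕ} {c : ℤ} (h : ∀ j < n, c ≤ S (t + j)) : c ≤ windowMin S n t :=
  le_inf' _ _ fun j hj => h j (mem_range.mp hj)

lemma windowMin_succ_of_isStrictMinAhead (hstep : ∀ t, S (t + 1) ≤ S t + 1) {t : ℕ}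
    (h : IsStrictMinAhead S n t) : windowMin S n (t + 1) = windowMin S n t + 1 := by
  have hmin : windowMin S n t = S t := by
    refine le_antisymm (windowMin_le_self t) (le_windowMin fun j hj => ?_)
    rcases j.eq_zero_or_pos with rfl | hj0
    · simp
    · exact (h j hj0 hj.le).le
  refine le_antisymm ?_ (le_windowMin fun j hj => ?_)
  · linarith [windowMin_le_self (S := S) (n := n) (t + 1), hstep t]
  · rw [hmin, add_right_comm]
    exact h (j + 1) (by omega) hj

lemma windowMin_succ_of_not_isStrictMinAhead {p : ℕ} (hper : ∀ t, S (t + n) = S t + p)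
    {t : ℕ} (h : ¬ IsStrictMinAhead S n t) : windowMin S n (t + 1) = windowMin S n t := by
  obtain ⟨m, hm1, hmn, hle⟩ : ∃ m, 1 ≤ m ∧ m ≤ n ∧ S (t + m) ≤ S t := by
    simpa [IsStrictMinAhead] using h
  have hshift : ∀ j, 1 ≤ j → j ≤ n → windowMin S n (t + 1) ≤ S (t + j) := fun j hj1 hjn => by
    simpa [show t + 1 + (j - 1) = t + j by omega] using
      windowMin_le (S := S) (t := t + 1) (j := j - 1) (by omega)
  refine le_antisymm (le_windowMin fun j hj => ?_) (le_windowMin fun j hj => ?_)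
  · rcases j.eq_zero_or_pos with rfl | hj0
    · simpa using (hshift m hm1 hmn).trans hle
    · exact hshift j hj0 hj.le
  · rcases (j + 1).lt_or_ge n with hj' | hj'
    · simpa [add_assoc, add_comm 1 j] using windowMin_le (S := S) (t := t) hj'
    · rw [show t + 1 + j = t + n by omega, hper]
      linarith [windowMin_le_self (S := S) (n := n) t]

lemma windowMin_add_period {p : ℕ} (hper : ∀ t, S (t + n) = S t + p) (t : ℕ) :
    windowMin S n (t + n) = windowMin S n t + p := by
  simp only [windowMin, add_right_comm t n, hper]
  exact (map_finset_inf' (OrderIso.addRight (p : ℤ)) _ _).symm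

theorem card_filter_isStrictMinAhead [DecidablePred (IsStrictMinAhead S n)] {p : ℕ}
    (hstep : ∀ t, S (t + 1) ≤ S t + 1) (hper : ∀ t, S (t + n) = S t + p) :
    #{t ∈ range n | IsStrictMinAhead S n t} = p := by
  have hsucc : ∀ t, windowMin S n (t + 1) - windowMin S n t
      = if IsStrictMinAhead S n t then 1 else 0 := fun t => by
    split_ifs with h
    · rw [windowMin_succ_of_isStrictMinAhead hstep h]; ring
    · rw [windowMin_succ_of_not_isStrictMinAhead hper h]; ring
  have htel := sum_range_sub (windowMin S n) n
  simp only [hsucc, sum_boole] at htel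
  have hperiod := windowMin_add_period hper 0
  rw [zero_add] at hperiod
  omega

end WindowMin

lemma natCard_setOf_val {n : ℕ} [NeZero n] (P : ℕ → Prop) [DecidablePred P] :
    Nat.card {r : ZMod n | P r.val} = #{t ∈ range n | P t} := by
  rw [Nat.card_coe_set_eq, ← Set.ncard_image_of_injective _ (ZMod.val_injective n),
    ← Set.ncard_coe_finset]
  congr 1
  ext t
  simp only [Set.mem_image, Set.mem_ofPred_eq, coe_filter, mem_range]
  constructor
  · rintro ⟨r, hr, rfl⟩
    exact ⟨ZMod.val_lt r, hr⟩
  · rintro ⟨ht, hP⟩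
    exact ⟨t, by rwa [ZMod.val_cast_of_lt ht], ZMod.val_cast_of_lt ht⟩

lemma sum_range_natCast_add {M : Type*} [AddCommMonoid M] {n : ℕ} [NeZero n] (c : ℕ)
    (f : ZMod n → M) : ∑ j ∈ range n, f ((c + j : ℕ) : ZMod n) = ∑ i, f i := by
  refine sum_nbij' (fun j => ((c + j : ℕ) : ZMod n)) (fun i => (i - c).val) ?_ ?_ ?_ ?_ ?_
  · simp
  · simp [ZMod.val_lt]
  · intro j hj
    simp [ZMod.val_cast_of_lt (mem_range.mp hj)]
  · intro i _
    simp
  · simp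

def weight (q : ℕ) (b : Bool) : ℤ := if b then -q else 1

lemma weight_le_one (q : ℕ) (b : Bool) : weight q b ≤ 1 := by
  cases b <;> simp [weight]

lemma sum_map_weight (q : ℕ) (l : List Bool) :
    (l.map (weight q)).sum = l.count false - q * l.count true := by
  induction l with
  | nil => simp
  | cons b l ih => cases b <;> simp [weight, ih] <;> ring

lemma sum_weight_eq_natCard {α : Type*} [Fintype α] (q : ℕ) (a : α → Bool) :
    ∑ i, weight q (a i) = Nat.card {i | a i = false} - q * Nat.card {i | a i = true} := by
  classical
  simp [weight, sum_ite, Nat.card_eq_fintype_card, Fintype.card_subtype]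
  ring

lemma qDominating_iff_sum_map_weight_pos (q : ℕ) (l : List Bool) :
    QDominating q l ↔ ∀ m, 1 ≤ m → m ≤ l.length → 0 < ((l.take m).map (weight q)).sum := by
  simp only [QDominating, sum_map_weight, sub_pos]
  norm_cast

section Arrangement

variable {n : ℕ} (q : ℕ) (a : ZMod n → Bool)

-- Shifted by one so that the linearization ending at `r` starts at `t = r.val`.
def partialWeight (t : ℕ) : ℤ := ∑ j ∈ range t, weight q (a ((j + 1 : ℕ) : ZMod n))

lemma partialWeight_succ_le (t : ℕ) : partialWeight q a (t + 1) ≤ partialWeight q a t + 1 := by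
  unfold partialWeight
  rw [sum_range_succ]
  gcongr
  exact weight_le_one q _

variable [NeZero n]

lemma partialWeight_add_period (t : ℕ) :
    partialWeight q a (t + n) = partialWeight q a t + ∑ i, weight q (a i) := by
  rw [partialWeight, partialWeight, sum_range_add, ← sum_range_natCast_add (t + 1)]
  simp only [add_right_comm t]

lemma sum_map_weight_take_linearization (r : ZMod n) {m : ℕ} (hm : m ≤ n) :
    (((linearization a r).take m).map (weight q)).sum
      = partialWeight q a (r.val + m) - partialWeight q a r.val := by
  rw [partialWeight, partialWeight, sum_range_add, add_sub_cancel_left, linearization,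
    ← List.map_take, List.take_range, min_eq_left hm, List.map_map, sum_eq_multiset_sum,
    range_val, ← Multiset.coe_range, Multiset.map_coe, Multiset.sum_coe]
  congr 2
  ext j
  simp [← add_assoc]

lemma qDominating_linearization_iff (r : ZMod n) :
    QDominating q (linearization a r) ↔ IsStrictMinAhead (partialWeight q a) n r.val := by
  rw [qDominating_iff_sum_map_weight_pos]
  simp only [IsStrictMinAhead, linearization, List.length_map, List.length_range]
  refine forall_congr' fun m => imp_congr_right fun _ => forall_congr' fun hm => ?_
  rw [← linearization, sum_map_weight_take_linearization q a r hm, sub_pos]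

end Arrangement

end CycleLemma

open CycleLemma

/-- (Cycle Lemma, Dvoretzky–Motzkin) If `a` is a `(k, qk+p)`-arrangement, i.e. a cyclic
sequence of length `(q+1)k + p` with exactly `k` entries equal to 1 and `qk+p` entries
equal to 0, then exactly `p` of the positions `r` are such that the linearization of `a`
ending at `r` is a `q`-dominating sequence. -/
theorem cycle_lemma (k q p : ℕ) (a : ZMod ((q + 1) * k + p) → Bool)
    (hones : Nat.card {i : ZMod ((q + 1) * k + p) | a i = true} = k)
    (hzeros : Nat.card {i : ZMod ((q + 1) * k + p) | a i = false} = q * k + p) :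
    Nat.card {r : ZMod ((q + 1) * k + p) | QDominating q (linearization a r)} = p := by
  classical
  rcases Nat.eq_zero_or_pos ((q + 1) * k + p) with hn | hn
  · -- `ZMod 0 = ℤ` is infinite, so both sides vanish.
    have hall : ∀ r, QDominating q (linearization a r) := fun r m h1 h2 => by
      simp [linearization] at h2
      omega
    simp only [hall, Set.ofPred_true, Nat.card_univ, Nat.card_zmod]
    omega
  · have : NeZero ((q + 1) * k + p) := ⟨hn.ne'⟩
    have hper : ∀ t, partialWeight q a (t + ((q + 1) * k + p)) = partialWeight q a t + p := by
      intro t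
      rw [partialWeight_add_period, sum_weight_eq_natCard, hones, hzeros]
      push_cast
      ring
    simp_rw [qDominating_linearization_iff]
    rw [natCard_setOf_val]
    exact card_filter_isStrictMinAhead (partialWeight_succ_le q a) hper
end

section
/- For integers k ≥ 0, q ≥ 0, and p ≥ 1, the number of q-dominating sequences with exactly k 1's and qk+p 0's equals (p/((q+1)k+p)) · binom((q+1)k+p, k); in particular this rational expression is an integer. -/
namespace QDominating

variable {q : ℕ}

theorem append_singleton_iff {l : List Bool} {x : Bool} :
    QDominating q (l ++ [x]) ↔
      QDominating q l ∧ q * (l ++ [x]).count true < (l ++ [x]).count false := by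
  constructor
  · intro h
    refine ⟨fun m hm hml => ?_, ?_⟩
    · simpa [List.take_append_of_le_length hml] using h m hm (by simp; omega)
    · have := h (l.length + 1) (by omega) (by simp)
      rwa [List.take_of_length_le (by simp)] at this
  · rintro ⟨hl, hlx⟩ m hm hml
    rcases Nat.lt_or_ge l.length m with hlm | hml'
    · rwa [List.take_of_length_le (by simp at hml ⊢; omega)]
    · simpa [List.take_append_of_le_length hml'] using hl m hm hml'

theorem replicate_false (n : ℕ) : QDominating q (List.replicate n false) := by
  intro m hm hmn
  simp only [List.length_replicate] at hmn
  simp [List.take_replicate, List.count_replicate]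
  omega

end QDominating

def dominatingSeqs (q k z : ℕ) : Set (List Bool) :=
  {l | l.count true = k ∧ l.count false = z ∧ QDominating q l}

section

variable {q k z : ℕ} {l : List Bool}

theorem dominatingSeqs_finite : (dominatingSeqs q k z).Finite :=
  (List.finite_length_eq Bool (k + z)).subset fun l ⟨hk, hz, _⟩ => by
    simp [← List.count_true_add_count_false, hk, hz]

theorem append_false_mem_dominatingSeqs_iff :
    l ++ [false] ∈ dominatingSeqs q k (z + 1) ↔ q * k < z + 1 ∧ l ∈ dominatingSeqs q k z := by
  simp only [dominatingSeqs, Set.mem_ofPred_eq, QDominating.append_singleton_iff,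
    List.count_append, List.count_singleton_self]
  grind

theorem append_true_mem_dominatingSeqs_iff :
    l ++ [true] ∈ dominatingSeqs q (k + 1) z ↔ q * (k + 1) < z ∧ l ∈ dominatingSeqs q k z := by
  simp only [dominatingSeqs, Set.mem_ofPred_eq, QDominating.append_singleton_iff,
    List.count_append, List.count_singleton_self]
  grind

theorem dominatingSeqs_zero_left : dominatingSeqs q 0 z = {List.replicate z false} := by
  ext l
  simp only [dominatingSeqs, Set.mem_ofPred_eq, Set.mem_singleton_iff]
  constructor
  · rintro ⟨hk, hz, -⟩
    have hlen := l.count_true_add_count_false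
    rw [hk, hz, zero_add] at hlen
    refine List.eq_replicate_iff.2 ⟨hlen.symm, fun b hb => ?_⟩
    cases b
    · rfl
    · exact absurd hb (List.count_eq_zero.1 hk)
  · rintro rfl
    exact ⟨by simp [List.count_replicate], by simp, QDominating.replicate_false z⟩

theorem dominatingSeqs_eq_empty : dominatingSeqs q (k + 1) (q * (k + 1)) = ∅ := by
  refine Set.eq_empty_of_forall_notMem fun l ⟨hk, hz, hl⟩ => ?_
  have := hl l.length (by rw [← List.count_true_add_count_false, hk]; omega) le_rfl
  rw [List.take_length, hk, hz] at this
  exact lt_irrefl _ this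

theorem dominatingSeqs_succ_succ (h : q * (k + 1) < z + 1) :
    dominatingSeqs q (k + 1) (z + 1) =
      (· ++ [false]) '' dominatingSeqs q (k + 1) z ∪ (· ++ [true]) '' dominatingSeqs q k (z + 1) := by
  ext l
  rcases l.eq_nil_or_concat' with rfl | ⟨l, _ | _, rfl⟩
  · simp [dominatingSeqs]
  · simp [append_false_mem_dominatingSeqs_iff, h]
  · simp [append_true_mem_dominatingSeqs_iff, h]

theorem ncard_dominatingSeqs_succ_succ (h : q * (k + 1) < z + 1) :
    (dominatingSeqs q (k + 1) (z + 1)).ncard =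
      (dominatingSeqs q (k + 1) z).ncard + (dominatingSeqs q k (z + 1)).ncard := by
  have hdisj : Disjoint ((· ++ [false]) '' dominatingSeqs q (k + 1) z)
      ((· ++ [true]) '' dominatingSeqs q k (z + 1)) := by
    rw [Set.disjoint_left]
    rintro _ ⟨l₁, -, rfl⟩ ⟨l₂, -, h⟩
    simpa using congrArg List.getLast? h
  rw [dominatingSeqs_succ_succ h, Set.ncard_union_eq hdisj (dominatingSeqs_finite.image _)
    (dominatingSeqs_finite.image _), Set.ncard_image_of_injective _ (List.append_left_injective _),
    Set.ncard_image_of_injective _ (List.append_left_injective _)]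

end

theorem mul_ncard_dominatingSeqs (q k p : ℕ) :
    ((q + 1) * k + p) * (dominatingSeqs q k (q * k + p)).ncard =
      p * ((q + 1) * k + p).choose k := by
  induction k generalizing p with
  | zero => simp [dominatingSeqs_zero_left]
  | succ k ihk =>
    induction p with
    | zero => simp [dominatingSeqs_eq_empty]
    | succ p ihp =>
      set m := (q + 1) * (k + 1) + p with hm
      have ihk' : m * (dominatingSeqs q k (q * (k + 1) + p + 1)).ncard =
          (p + q + 1) * m.choose k := by
        rw [show q * (k + 1) + p + 1 = q * k + (p + q + 1) by ring,
          show m = (q + 1) * k + (p + q + 1) by rw [hm]; ring]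
        exact ihk (p + q + 1)
      have hchoose : m.choose (k + 1) * (k + 1) = m.choose k * (q * (k + 1) + p + 1) := by
        rw [Nat.choose_succ_right_eq,
          Nat.sub_eq_of_eq_add (show m = q * (k + 1) + p + 1 + k by rw [hm]; ring)]
      show (m + 1) * (dominatingSeqs q (k + 1) (q * (k + 1) + p + 1)).ncard =
        (p + 1) * (m + 1).choose (k + 1)
      rw [ncard_dominatingSeqs_succ_succ (by omega), Nat.choose_succ_succ']
      refine Nat.eq_of_mul_eq_mul_left (by positivity : 0 < m) ?_
      linear_combination (m + 1) * ihp + (m + 1) * ihk' - (q + 1) * hchoose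

/-- For `k, q ≥ 0` and `p ≥ 1`, the number of `q`-dominating sequences with exactly
`k` 1's and `qk + p` 0's equals `(p/((q+1)k+p)) · C((q+1)k+p, k)`; in particular this
rational expression is an integer. -/
theorem count_q_dominating (k q p : ℕ) (hp : 1 ≤ p) :
    (Nat.card {l : List Bool //
        l.count true = k ∧ l.count false = q * k + p ∧ QDominating q l} : ℚ) =
      (p : ℚ) / ((q + 1) * k + p) * Nat.choose ((q + 1) * k + p) k := by
  have hpos : ((q + 1) * k + p : ℚ) ≠ 0 := by exact_mod_cast (Nat.add_pos_right _ hp).ne'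
  change (Nat.card (dominatingSeqs q k (q * k + p)) : ℚ) = _
  rw [Nat.card_coe_set_eq, div_mul_eq_mul_div, eq_div_iff hpos, mul_comm]
  exact_mod_cast mul_ncard_dominatingSeqs q k p
end

section
/- For integers k ≥ 0, q ≥ 0, and p ≥ 1, the number of q-satisfying sequences with exactly k 1's and qk+p−1 0's equals (p/(qk+p)) · binom((q+1)k+p−1, k). -/
/-- A sequence of 0's (`false`) and 1's (`true`) is `q`-satisfying if in every
prefix the number of 0's is at least `q` times the number of 1's. -/
def QSatisfying (q : ℕ) (l : List Bool) : Prop :=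
  ∀ m : ℕ, m ≤ l.length →
    q * (l.take m).count true ≤ (l.take m).count false

/-!
A `q`-satisfying sequence with `a + 1` 1's and `b + 1` 0's is a shorter `q`-satisfying sequence
followed by a `1` or a `0`, and when `q (a + 1) ≤ b + 1` every such extension is again
`q`-satisfying. The generalized ballot numbers `(b + 1 - q a) / (b + 1) · C(a + b, a)` obey the
same Pascal-type recurrence and boundary values, and they vanish on the line `q a = b + 1`,
beyond which there are no `q`-satisfying sequences at all. Taking `b = q k + p - 1` gives the
theorem.
-/

open Finset

theorem qSatisfying_zero (l : List Bool) : QSatisfying 0 l := fun _ _ => by simp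

theorem qSatisfying_replicate_false (q n : ℕ) : QSatisfying q (List.replicate n false) :=
  fun m _ => by simp [List.take_replicate, List.count_replicate]

theorem QSatisfying.mul_count_le {q : ℕ} {l : List Bool} (h : QSatisfying q l) :
    q * l.count true ≤ l.count false := by
  simpa only [List.take_length] using h _ le_rfl

theorem qSatisfying_append_singleton {q : ℕ} {l : List Bool} {c : Bool} :
    QSatisfying q (l ++ [c]) ↔
      QSatisfying q l ∧ q * (l ++ [c]).count true ≤ (l ++ [c]).count false := by
  refine ⟨fun h => ⟨fun m hm => ?_, ?_⟩, ?_⟩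
  · simpa [List.take_append_of_le_length hm] using h m (by simp; omega)
  · exact h.mul_count_le
  · rintro ⟨hl, hlast⟩ m hm
    rcases Nat.lt_or_ge m (l.length + 1) with hm' | hm'
    · rw [List.take_append_of_le_length (by omega)]
      exact hl m (by omega)
    · rwa [List.take_of_length_le (by simp; omega)]

open Classical in
noncomputable def qSatisfyingSeqs (q a b : ℕ) : Finset (List Bool) :=
  ((univ : Finset (List.Vector Bool (a + b))).map ⟨_, List.Vector.toList_injective⟩).filter
    fun l => l.count true = a ∧ l.count false = b ∧ QSatisfying q l

theorem mem_qSatisfyingSeqs {q a b : ℕ} {l : List Bool} :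
    l ∈ qSatisfyingSeqs q a b ↔ l.count true = a ∧ l.count false = b ∧ QSatisfying q l := by
  simp only [qSatisfyingSeqs, mem_filter, and_iff_right_iff_imp]
  rintro ⟨ht, hf, -⟩
  exact mem_map.2 ⟨⟨l, by rw [← ht, ← hf, l.count_true_add_count_false]⟩, mem_univ _, rfl⟩

theorem append_true_mem_qSatisfyingSeqs {q a b : ℕ} {l : List Bool} :
    l ++ [true] ∈ qSatisfyingSeqs q (a + 1) b ↔
      l ∈ qSatisfyingSeqs q a b ∧ q * (a + 1) ≤ b := by
  simp +contextual [mem_qSatisfyingSeqs, qSatisfying_append_singleton, and_assoc]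

theorem append_false_mem_qSatisfyingSeqs {q a b : ℕ} {l : List Bool} :
    l ++ [false] ∈ qSatisfyingSeqs q a (b + 1) ↔
      l ∈ qSatisfyingSeqs q a b ∧ q * a ≤ b + 1 := by
  simp +contextual [mem_qSatisfyingSeqs, qSatisfying_append_singleton, and_assoc]

theorem qSatisfyingSeqs_succ_succ {q a b : ℕ} (h : q * (a + 1) ≤ b + 1) :
    qSatisfyingSeqs q (a + 1) (b + 1) =
      (qSatisfyingSeqs q a (b + 1)).image (· ++ [true]) ∪
        (qSatisfyingSeqs q (a + 1) b).image (· ++ [false]) := by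
  ext l
  rcases l.eq_nil_or_concat with rfl | ⟨l, c, rfl⟩
  · simp [mem_qSatisfyingSeqs]
  · cases c <;> simp [List.append_singleton_inj, append_true_mem_qSatisfyingSeqs,
      append_false_mem_qSatisfyingSeqs, h]

theorem card_qSatisfyingSeqs_succ_succ {q a b : ℕ} (h : q * (a + 1) ≤ b + 1) :
    #(qSatisfyingSeqs q (a + 1) (b + 1)) =
      #(qSatisfyingSeqs q a (b + 1)) + #(qSatisfyingSeqs q (a + 1) b) := by
  rw [qSatisfyingSeqs_succ_succ h, card_union_of_disjoint, card_image_of_injective _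
    (List.append_left_injective _), card_image_of_injective _ (List.append_left_injective _)]
  simp [disjoint_left, List.append_singleton_inj]

theorem eq_replicate_of_count_eq_zero {l : List Bool} {c : Bool} (h : l.count c = 0) :
    l = List.replicate (l.count !c) !c := by
  rw [List.eq_replicate_iff, ← List.count_not_add_count l c, h, add_zero]
  refine ⟨rfl, fun x hx => ?_⟩
  have : x ≠ c := fun hxc => List.count_eq_zero.1 h (hxc ▸ hx)
  cases x <;> cases c <;> simp_all

theorem qSatisfyingSeqs_zero_left (q b : ℕ) :
    qSatisfyingSeqs q 0 b = {List.replicate b false} := by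
  ext l
  simp only [mem_qSatisfyingSeqs, mem_singleton]
  constructor
  · rintro ⟨ht, rfl, -⟩
    exact eq_replicate_of_count_eq_zero ht
  · rintro rfl
    simp [List.count_replicate, qSatisfying_replicate_false]

theorem qSatisfyingSeqs_zero_zero_right (a : ℕ) :
    qSatisfyingSeqs 0 a 0 = {List.replicate a true} := by
  ext l
  simp only [mem_qSatisfyingSeqs, mem_singleton]
  constructor
  · rintro ⟨rfl, hf, -⟩
    exact eq_replicate_of_count_eq_zero hf
  · rintro rfl
    simp [List.count_replicate, qSatisfying_zero]

theorem qSatisfyingSeqs_eq_empty {q a b : ℕ} (h : b < q * a) : qSatisfyingSeqs q a b = ∅ := by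
  refine eq_empty_of_forall_notMem fun l hl => ?_
  obtain ⟨rfl, rfl, hq⟩ := mem_qSatisfyingSeqs.1 hl
  exact h.not_ge hq.mul_count_le

noncomputable def ballotNumber (q a b : ℕ) : ℚ :=
  (b + 1 - q * a) / (b + 1) * (a + b).choose a

theorem ballotNumber_zero_left (q b : ℕ) : ballotNumber q 0 b = 1 := by
  simp [ballotNumber, div_self (b.cast_add_one_ne_zero : (b + 1 : ℚ) ≠ 0)]

theorem ballotNumber_zero_zero_right (a : ℕ) : ballotNumber 0 a 0 = 1 := by
  simp [ballotNumber]

theorem ballotNumber_eq_zero {q a b : ℕ} (h : q * a = b + 1) : ballotNumber q a b = 0 := by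
  have : (b + 1 : ℚ) - q * a = 0 := by rw [sub_eq_zero]; exact_mod_cast h.symm
  simp [ballotNumber, this]

theorem ballotNumber_succ_succ (q a b : ℕ) :
    ballotNumber q (a + 1) (b + 1) = ballotNumber q a (b + 1) + ballotNumber q (a + 1) b := by
  have ratio : ((a + b + 1).choose (a + 1) : ℚ) * (a + 1) = (a + b + 1).choose a * (b + 1) := by
    have := Nat.choose_succ_right_eq (a + b + 1) a
    rw [show a + b + 1 - a = b + 1 by omega] at this
    exact_mod_cast this
  unfold ballotNumber
  rw [show a + 1 + (b + 1) = a + b + 1 + 1 by ring, Nat.choose_succ_succ,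
    show a + (b + 1) = a + b + 1 by ring, show a + 1 + b = a + b + 1 by ring]
  push_cast
  field_simp
  linear_combination (q : ℚ) * ratio

theorem card_qSatisfyingSeqs {q : ℕ} :
    ∀ {a b : ℕ}, q * a ≤ b + 1 → (#(qSatisfyingSeqs q a b) : ℚ) = ballotNumber q a b
  | 0, b, _ => by simp [qSatisfyingSeqs_zero_left, ballotNumber_zero_left]
  | a + 1, b, h => by
    obtain h | h := h.eq_or_lt
    · rw [qSatisfyingSeqs_eq_empty (by omega), ballotNumber_eq_zero h, card_empty, Nat.cast_zero]
    cases b with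
    | zero =>
      obtain rfl : q = 0 := by simpa using h
      simp [qSatisfyingSeqs_zero_zero_right, ballotNumber_zero_zero_right]
    | succ b =>
      rw [card_qSatisfyingSeqs_succ_succ (by omega), Nat.cast_add, ballotNumber_succ_succ,
        card_qSatisfyingSeqs (a := a) (by nlinarith), card_qSatisfyingSeqs (by omega)]

/-- For `k, q ≥ 0` and `p ≥ 1`, the number of `q`-satisfying sequences with exactly
`k` 1's and `qk + p − 1` 0's equals `(p/(qk+p)) · C((q+1)k+p−1, k)`. -/
theorem count_q_satisfying (k q p : ℕ) (hp : 1 ≤ p) :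
    (Nat.card {l : List Bool //
        l.count true = k ∧ l.count false = q * k + p - 1 ∧ QSatisfying q l} : ℚ) =
      (p : ℚ) / (q * k + p) * Nat.choose ((q + 1) * k + p - 1) k := by
  obtain ⟨p, rfl⟩ := Nat.exists_eq_add_of_le' hp
  simp only [← mem_qSatisfyingSeqs, Nat.card_eq_finsetCard]
  rw [card_qSatisfyingSeqs (by omega), ballotNumber, show q * k + (p + 1) - 1 = q * k + p by omega,
    show (q + 1) * k + (p + 1) - 1 = k + (q * k + p) by ring_nf; omega]
  push_cast
  ring_nf
end

section
/- For integers q ≥ 0, m ≥ 0, and k ≥ 0 with (q+1)k ≤ m, the number of q-satisfying sequences of length m having exactly k 1's equals ((m−(q+1)k+1)/(m−k+1)) · binom(m, k). -/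
/-! Let `N(m, k)` be the number of `q`-satisfying sequences of length `m` with `k` ones.
Removing the last letter gives `N(m+1, k+1) = N(m, k+1) + N(m, k)` whenever
`(q+1)(k+1) ≤ m+1`, while `N(m, k) = 0` once `m < (q+1)k`. The numbers
`C(m, k+1) - q C(m, k)` obey the same Pascal recurrence and vanish on the boundary
`(q+1)(k+1) = m+1`, so they equal `N(m, k+1)`; together with
`C(m, k+1) (k+1) = C(m, k) (m-k)` this is the stated quotient. -/

namespace QSatisfying

variable {q : ℕ} {l : List Bool}

theorem mul_count_true_le (h : QSatisfying q l) : q * l.count true ≤ l.count false := by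
  simpa using h l.length le_rfl

theorem append_singleton_iff {b : Bool} :
    QSatisfying q (l ++ [b]) ↔
      QSatisfying q l ∧ q * (l ++ [b]).count true ≤ (l ++ [b]).count false := by
  refine ⟨fun h => ⟨fun n hn => ?_, h.mul_count_true_le⟩, fun ⟨hl, hlast⟩ n hn => ?_⟩
  · simpa [List.take_append_of_le_length hn] using h n (by simp; omega)
  · rcases Nat.lt_or_ge n (l.length + 1) with hn' | hn'
    · rw [List.take_append_of_le_length (by omega)]
      exact hl n (by omega)
    · rwa [List.take_of_length_le (by simpa using hn')]

theorem replicate_false (q n : ℕ) : QSatisfying q (List.replicate n false) := by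
  intro m _
  simp [List.take_replicate, List.count_replicate]

end QSatisfying

def qSatisfyingSet (q m k : ℕ) : Set (List Bool) :=
  {l | l.length = m ∧ l.count true = k ∧ QSatisfying q l}

theorem qSatisfyingSet_finite (q m k : ℕ) : (qSatisfyingSet q m k).Finite :=
  (List.finite_length_eq Bool m).subset fun _ hl => hl.1

theorem qSatisfyingSet_zero (q m : ℕ) :
    qSatisfyingSet q m 0 = {List.replicate m false} := by
  ext l
  simp only [qSatisfyingSet, Set.mem_ofPred_eq, Set.mem_singleton_iff, List.count_eq_zero]
  constructor
  · rintro ⟨hlen, htrue, -⟩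
    exact List.eq_replicate_iff.2 ⟨hlen, fun b hb => by cases b <;> simp_all⟩
  · rintro rfl
    exact ⟨List.length_replicate, by simp, QSatisfying.replicate_false q m⟩

theorem qSatisfyingSet_eq_empty_of_lt (q : ℕ) {m k : ℕ} (h : m < (q + 1) * k) :
    qSatisfyingSet q m k = ∅ := by
  refine Set.eq_empty_of_forall_notMem fun l ⟨hlen, htrue, hl⟩ => ?_
  have := hl.mul_count_true_le
  have := l.count_true_add_count_false
  rw [htrue] at *
  nlinarith

theorem qSatisfyingSet_succ_succ {q m k : ℕ} (h : (q + 1) * (k + 1) ≤ m + 1) :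
    qSatisfyingSet q (m + 1) (k + 1) =
      (· ++ [false]) '' qSatisfyingSet q m (k + 1) ∪ (· ++ [true]) '' qSatisfyingSet q m k := by
  ext l
  constructor
  · rintro ⟨hlen, htrue, hl⟩
    obtain ⟨l, b, rfl⟩ := (List.eq_nil_or_concat' l).resolve_left (by rintro rfl; simp at hlen)
    have hl' := (QSatisfying.append_singleton_iff.1 hl).1
    cases b
    · exact Or.inl ⟨l, ⟨by simpa using hlen, by simpa using htrue, hl'⟩, rfl⟩
    · exact Or.inr ⟨l, ⟨by simpa using hlen, by simpa using htrue, hl'⟩, rfl⟩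
  · rintro (⟨l, ⟨hlen, htrue, hl⟩, rfl⟩ | ⟨l, ⟨hlen, htrue, hl⟩, rfl⟩) <;>
      refine ⟨by simpa using hlen, by simpa using htrue,
        QSatisfying.append_singleton_iff.2 ⟨hl, ?_⟩⟩
    · simpa [htrue] using hl.mul_count_true_le.trans (Nat.le_succ _)
    · have hsum := l.count_true_add_count_false
      rw [htrue, hlen] at hsum
      have : q * (k + 1) ≤ l.count false := by nlinarith
      simpa [htrue]

theorem ncard_qSatisfyingSet_succ_succ {q m k : ℕ} (h : (q + 1) * (k + 1) ≤ m + 1) :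
    (qSatisfyingSet q (m + 1) (k + 1)).ncard =
      (qSatisfyingSet q m (k + 1)).ncard + (qSatisfyingSet q m k).ncard := by
  have hdisj : Disjoint ((· ++ [false]) '' qSatisfyingSet q m (k + 1))
      ((· ++ [true]) '' qSatisfyingSet q m k) := by
    rw [Set.disjoint_left]
    rintro _ ⟨x, -, rfl⟩ ⟨y, -, hxy⟩
    simpa using congrArg List.getLast? hxy
  rw [qSatisfyingSet_succ_succ h, Set.ncard_union_eq hdisj ((qSatisfyingSet_finite ..).image _)
    ((qSatisfyingSet_finite ..).image _), Set.ncard_image_of_injective _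
    (List.append_left_injective _), Set.ncard_image_of_injective _ (List.append_left_injective _)]

theorem choose_succ_eq_mul_choose {q m k : ℕ} (h : (q + 1) * (k + 1) = m + 1) :
    m.choose (k + 1) = q * m.choose k := by
  have hmk : m - k = q * (k + 1) := by rw [add_mul] at h; omega
  have := Nat.choose_succ_right_eq m k
  rw [hmk, ← mul_assoc, mul_comm _ q] at this
  exact Nat.eq_of_mul_eq_mul_right k.succ_pos this

theorem ncard_qSatisfyingSet_add_mul_choose_of_eq {q m k : ℕ} (h : (q + 1) * (k + 1) = m + 1) :
    (qSatisfyingSet q m (k + 1)).ncard + q * m.choose k = m.choose (k + 1) := by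
  rw [qSatisfyingSet_eq_empty_of_lt q (by omega), Set.ncard_empty, choose_succ_eq_mul_choose h,
    zero_add]

/-- The ballot-type count `C(m, k+1) - q C(m, k)`, written without subtraction. -/
theorem ncard_qSatisfyingSet_add_mul_choose {q m k : ℕ} (h : (q + 1) * (k + 1) ≤ m + 1) :
    (qSatisfyingSet q m (k + 1)).ncard + q * m.choose k = m.choose (k + 1) := by
  induction m generalizing k with
  | zero =>
    exact ncard_qSatisfyingSet_add_mul_choose_of_eq (h.antisymm (Nat.one_le_iff_ne_zero.2
      (by positivity)))
  | succ m ih =>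
    rcases h.lt_or_eq with hlt | hbd
    · rw [ncard_qSatisfyingSet_succ_succ (by omega), Nat.choose_succ_succ' m k,
        ← ih (by omega)]
      cases k with
      | zero => simp only [qSatisfyingSet_zero, Set.ncard_singleton, Nat.choose_zero_right]; ring
      | succ j =>
        have := ih (k := j) (by nlinarith)
        rw [Nat.choose_succ_succ' m j]
        linarith
    · exact ncard_qSatisfyingSet_add_mul_choose_of_eq hbd

/-- For `q, m, k ≥ 0` with `(q+1)k ≤ m`, the number of `q`-satisfying sequences of
length `m` having exactly `k` 1's equals `((m−(q+1)k+1)/(m−k+1)) · C(m, k)`. -/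
theorem count_q_satisfying_length (q m k : ℕ) (h : (q + 1) * k ≤ m) :
    (Nat.card {l : List Bool //
        l.length = m ∧ l.count true = k ∧ QSatisfying q l} : ℚ) =
      ((m : ℚ) - (q + 1) * k + 1) / ((m : ℚ) - k + 1) * Nat.choose m k := by
  change ((qSatisfyingSet q m k).ncard : ℚ) = _
  cases k with
  | zero =>
    rw [qSatisfyingSet_zero, Set.ncard_singleton]
    simp [div_self (Nat.cast_add_one_ne_zero (R := ℚ) m)]
  | succ k =>
    have hkm : k < m := by nlinarith
    have hcount := ncard_qSatisfyingSet_add_mul_choose (by omega : (q + 1) * (k + 1) ≤ m + 1)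
    have hpascal := Nat.choose_succ_right_eq m k
    rw [← Nat.cast_inj (R := ℚ)] at hcount hpascal
    push_cast [hkm.le] at hcount hpascal ⊢
    have hpos : (m : ℚ) - (k + 1) + 1 ≠ 0 := by
      have : (k : ℚ) < m := by exact_mod_cast hkm
      linarith
    field_simp
    linear_combination ((m : ℚ) - k) * hcount + q * hpascal
end

section
/- (Strong Cycle Lemma) Let q ≥ 0, k ≥ 0, and let a be a (k, qk+1)-arrangement of length n = (q+1)k+1. For every i with 1 ≤ i ≤ qk+1 there is a unique position r with a_r = 0 such that |D(r)| = i, i.e. exactly i of the 0-intervals of the 0-linearization ending at r are q-good. Moreover the nesting property holds: if r and s are zero positions with |D(r)| < |D(s)|, then D(r) ⊆ D(s). -/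
/-- An interval (list of 0's and 1's) is `q`-good if its number of 0's (`false`)
strictly exceeds `q` times its number of 1's (`true`). -/
def QGood (q : ℕ) (I : List Bool) : Prop :=
  q * I.count true < I.count false

/-- The interval `(r, s]` of a cyclic arrangement `a : ZMod n → Bool`: the list
`a (r+1), …, a s` read cyclically, where `(r, r]` denotes the entire cycle. -/
def interval {n : ℕ} (a : ZMod n → Bool) (r s : ZMod n) : List Bool :=
  (List.range (if s = r then n else (s - r).val)).map
    (fun j => a (r + ((j + 1 : ℕ) : ZMod n)))

/-- For a zero position `r`, `Dset q a r` is the set of zero positions `j` such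
that the 0-interval `(r, j]` is `q`-good. -/
def Dset {n : ℕ} (q : ℕ) (a : ZMod n → Bool) (r : ZMod n) : Set (ZMod n) :=
  {j | a j = false ∧ QGood q (interval a r j)}

/-!
Weigh each `1` by `-q` and each `0` by `1`. A `(k, qk+1)`-arrangement of length `n` has total
weight `1`, and an interval is `q`-good iff its weight is positive. With prefix weights `P`, the
potential `φ(m) = n P(m) - m` is `n`-periodic and separates the positions of the cycle, and
`n · w((r, s]) = φ(s) - φ(r) + |(r, s]|` with `0 < |(r, s]| ≤ n`. Hence `(r, s]` is `q`-good iff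
`φ(r) ≤ φ(s)`, i.e. `D(r)` is the set of zero positions of potential at least `φ(r)`. These sets
form a chain, and ranking the `qk + 1` zero positions by potential gives `|D(r)| = 1, …, qk + 1`.
-/

namespace StrongCycle

open Finset

section Ranking

variable {α β : Type*} [LinearOrder β] (s : Finset α) (v : α → β)

theorem filter_le_subset_filter_le_of_le {r t : α} (h : v r ≤ v t) :
    s.filter (v t ≤ v ·) ⊆ s.filter (v r ≤ v ·) :=
  monotone_filter_right s fun _ _ => h.trans

theorem filter_le_subset_of_card_lt {r t : α}
    (h : #(s.filter (v r ≤ v ·)) < #(s.filter (v t ≤ v ·))) :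
    s.filter (v r ≤ v ·) ⊆ s.filter (v t ≤ v ·) := by
  rcases le_total (v t) (v r) with hle | hle
  · exact filter_le_subset_filter_le_of_le s v hle
  · exact absurd (card_le_card (filter_le_subset_filter_le_of_le s v hle)) h.not_ge

theorem injOn_card_filter_le (hv : Set.InjOn v s) :
    Set.InjOn (fun r => #(s.filter (v r ≤ v ·))) s := by
  have key : ∀ r ∈ s, ∀ t ∈ s, v r ≤ v t →
      #(s.filter (v r ≤ v ·)) = #(s.filter (v t ≤ v ·)) → r = t := by
    intro r hr t ht hle hcard
    have heq := eq_of_subset_of_card_le (filter_le_subset_filter_le_of_le s v hle) hcard.le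
    have hrt : r ∈ s.filter (v t ≤ v ·) := heq ▸ mem_filter.2 ⟨hr, le_rfl⟩
    exact hv hr ht (le_antisymm hle (mem_filter.1 hrt).2)
  intro r hr t ht h
  rcases le_total (v r) (v t) with hle | hle
  · exact key r hr t ht hle h
  · exact (key t ht r hr hle h.symm).symm

theorem image_card_filter_le (hv : Set.InjOn v s) :
    s.image (fun r => #(s.filter (v r ≤ v ·))) = Icc 1 #s := by
  refine eq_of_subset_of_card_le (fun i hi => ?_) ?_
  · obtain ⟨r, hr, rfl⟩ := mem_image.1 hi
    exact mem_Icc.2 ⟨card_pos.2 ⟨r, mem_filter.2 ⟨hr, le_rfl⟩⟩, card_filter_le _ _⟩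
  · rw [Nat.card_Icc, card_image_of_injOn (injOn_card_filter_le s v hv), Nat.add_sub_cancel]

theorem existsUnique_card_filter_le (hv : Set.InjOn v s) {i : ℕ} (hi : i ∈ Icc 1 #s) :
    ∃! r ∈ s, #(s.filter (v r ≤ v ·)) = i := by
  rw [← image_card_filter_le s v hv] at hi
  obtain ⟨r, hr, rfl⟩ := mem_image.1 hi
  exact ⟨r, ⟨hr, rfl⟩, fun t ht => injOn_card_filter_le s v hv ht.1 hr ht.2⟩

end Ranking

def weight (q : ℕ) (b : Bool) : ℤ := if b then -(q : ℤ) else 1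

theorem sum_map_weight (q : ℕ) (L : List Bool) :
    (L.map (weight q)).sum = L.count false - q * L.count true := by
  induction L with
  | nil => simp
  | cons b L ih =>
    rw [List.map_cons, List.sum_cons, ih, List.count_cons, List.count_cons]
    cases b <;> simp only [weight, Bool.false_eq_true, ↓reduceIte, BEq.rfl, beq_true, beq_false,
      Bool.not_true, add_zero, Nat.cast_add, Nat.cast_one] <;> ring

theorem qGood_iff_sum_map_weight_pos (q : ℕ) (L : List Bool) :
    QGood q L ↔ 0 < (L.map (weight q)).sum := by
  rw [sum_map_weight, QGood, sub_pos]
  exact_mod_cast Iff.rfl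

theorem sum_weight_eq_card_filter {α : Type*} [Fintype α] (q : ℕ) (a : α → Bool) :
    ∑ x, weight q (a x) = #(univ.filter (a · = false)) - q * #(univ.filter (a · = true)) := by
  simp only [weight, sum_ite, sum_neg_distrib, sum_const, Int.nsmul_eq_mul, Bool.not_eq_true,
    mul_one]
  ring

section Arrangement

variable {n : ℕ} (q : ℕ) (a : ZMod n → Bool)

def prefixWeight (m : ℕ) : ℤ := ∑ i ∈ range m, weight q (a (i + 1 : ℕ))

def potential (m : ℕ) : ℤ := n * prefixWeight q a m - m

theorem length_interval (r s : ZMod n) :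
    (interval a r s).length = if s = r then n else (s - r).val := by
  simp [interval]

theorem sum_map_weight_interval [NeZero n] (r s : ZMod n) :
    ((interval a r s).map (weight q)).sum =
      prefixWeight q a (r.val + (interval a r s).length) - prefixWeight q a r.val := by
  rw [prefixWeight, prefixWeight, sum_range_add, add_sub_cancel_left, interval, List.length_map,
    List.length_range, List.map_map]
  show ∑ i ∈ range _, _ = _
  refine sum_congr rfl fun i _ => ?_
  simp [add_assoc]

theorem sum_range_natCast_add {M : Type*} [AddCommMonoid M] [NeZero n] (g : ZMod n → M)
    (m : ℕ) : ∑ i ∈ range n, g ((m + i : ℕ) : ZMod n) = ∑ x, g x := by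
  refine sum_nbij' (fun i => ((m + i : ℕ) : ZMod n)) (fun x => (x - m).val)
    (fun _ _ => mem_univ _) (fun x _ => mem_range.2 (ZMod.val_lt _)) (fun i hi => ?_)
    (fun x _ => by simp) (fun _ _ => rfl)
  simpa using ZMod.val_cast_of_lt (mem_range.1 hi)

theorem prefixWeight_add_card [NeZero n] (m : ℕ) :
    prefixWeight q a (m + n) = prefixWeight q a m + ∑ x, weight q (a x) := by
  rw [prefixWeight, sum_range_add, ← sum_range_natCast_add (fun x => weight q (a x)) (m + 1)]
  simp only [prefixWeight, add_right_comm]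

theorem potential_periodic [NeZero n] (htot : ∑ x, weight q (a x) = 1) :
    Function.Periodic (potential q a) n := fun m => by
  simp only [potential, prefixWeight_add_card, htot]
  push_cast
  ring

theorem potential_val_injective [NeZero n] :
    Function.Injective fun j : ZMod n => potential q a j.val := by
  intro x y h
  refine ZMod.val_injective n (Nat.ModEq.eq_of_lt_of_lt ?_ (ZMod.val_lt x) (ZMod.val_lt y))
  rw [Nat.modEq_iff_dvd]
  exact ⟨prefixWeight q a y.val - prefixWeight q a x.val, by simp only [potential] at h; linarith⟩

theorem natCast_val_add_length_interval [NeZero n] (r s : ZMod n) :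
    ((r.val + (interval a r s).length : ℕ) : ZMod n) = s := by
  rw [length_interval]
  split_ifs with h <;> simp [h]

theorem mul_sum_map_weight_interval [NeZero n] (htot : ∑ x, weight q (a x) = 1) (r s : ZMod n) :
    n * ((interval a r s).map (weight q)).sum =
      potential q a s.val - potential q a r.val + (interval a r s).length := by
  have hmod : potential q a (r.val + (interval a r s).length) = potential q a s.val := by
    rw [← (potential_periodic q a htot).map_mod_nat, ← ZMod.val_natCast,
      natCast_val_add_length_interval]
  rw [sum_map_weight_interval, ← hmod, potential, potential]
  push_cast
  ring

theorem length_interval_pos [NeZero n] (r s : ZMod n) : 0 < (interval a r s).length := by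
  rw [length_interval]
  split_ifs with h
  · exact Nat.pos_of_neZero n
  · exact ZMod.val_pos.2 (sub_ne_zero.2 h)

theorem length_interval_le [NeZero n] (r s : ZMod n) : (interval a r s).length ≤ n := by
  rw [length_interval]
  split_ifs
  · rfl
  · exact (ZMod.val_lt _).le

theorem qGood_interval_iff [NeZero n] (htot : ∑ x, weight q (a x) = 1) (r s : ZMod n) :
    QGood q (interval a r s) ↔ potential q a r.val ≤ potential q a s.val := by
  have hmul := mul_sum_map_weight_interval q a htot r s
  have hpos : (0 : ℤ) < (interval a r s).length := by exact_mod_cast length_interval_pos a r s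
  have hle : ((interval a r s).length : ℤ) ≤ n := by exact_mod_cast length_interval_le a r s
  rw [qGood_iff_sum_map_weight_pos]
  constructor <;> intro h <;> nlinarith

theorem Dset_eq_filter [NeZero n] (htot : ∑ x, weight q (a x) = 1) (r : ZMod n) :
    Dset q a r =
      ↑((univ.filter (a · = false)).filter (potential q a r.val ≤ potential q a ·.val)) := by
  ext j
  simp [Dset, qGood_interval_iff q a htot]

end Arrangement

end StrongCycle

open StrongCycle Finset in
/-- (Strong Cycle Lemma) Let `a` be a `(k, qk+1)`-arrangement of length `(q+1)k+1`.
For every `i` with `1 ≤ i ≤ qk+1` there is a unique zero position `r` such that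
exactly `i` of the 0-intervals of the 0-linearization ending at `r` are `q`-good.
Moreover the nesting property holds: if `r` and `s` are zero positions with
`|D(r)| < |D(s)|`, then `D(r) ⊆ D(s)`. -/
theorem strong_cycle_lemma (q k : ℕ) (a : ZMod ((q + 1) * k + 1) → Bool)
    (hones : Nat.card {i : ZMod ((q + 1) * k + 1) | a i = true} = k) :
    (∀ i : ℕ, 1 ≤ i → i ≤ q * k + 1 →
        ∃! r : ZMod ((q + 1) * k + 1), a r = false ∧ (Dset q a r).ncard = i) ∧
      (∀ r s : ZMod ((q + 1) * k + 1), a r = false → a s = false →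
        (Dset q a r).ncard < (Dset q a s).ncard → Dset q a r ⊆ Dset q a s) := by
  set Z := univ.filter (a · = false)
  have hcard_ones : #(univ.filter (a · = true)) = k := by
    simpa [Nat.card_eq_fintype_card, Fintype.card_subtype] using hones
  have hZ : #Z = q * k + 1 := by
    have hsplit := card_filter_add_card_filter_not (s := univ) (a · = false)
    simp only [Bool.not_eq_false, hcard_ones, card_univ, ZMod.card] at hsplit
    linarith
  have htot : ∑ x, weight q (a x) = 1 := by
    rw [sum_weight_eq_card_filter, hZ, hcard_ones]
    push_cast
    ring
  have hD := Dset_eq_filter q a htot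
  set v := fun j : ZMod ((q + 1) * k + 1) => potential q a j.val
  refine ⟨fun i hi₁ hi₂ => ?_, fun r s _ _ hlt => ?_⟩
  · simp only [hD, Set.ncard_coe_finset]
    simpa [Z] using existsUnique_card_filter_le Z v (potential_val_injective q a).injOn
      (mem_Icc.2 ⟨hi₁, hZ ▸ hi₂⟩)
  · simp only [hD, Set.ncard_coe_finset, coe_subset] at hlt ⊢
    exact filter_le_subset_of_card_lt Z v hlt
end

section
/- Let q ≥ 0, k ≥ 0, and let a be a (k, qk+1)-arrangement. Then r ∈ D(r) for every zero position r, the sets D(r) over the qk+1 zero positions r are pairwise distinct, and they are linearly ordered by inclusion: for any two zero positions r ≠ s, either D(r) ⊊ D(s) or D(s) ⊊ D(r). -/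
/-!
Give a `0` the weight `1` and a `1` the weight `-q`; a `(k, qk+1)`-arrangement then has total
weight `1`. Writing `P x` for the weight of the positions `1, …, x`, the weight of `(r, j]` is
`P j - P r`, plus the total weight `1` when the interval wraps around, i.e. when `j ≤ r`. Hence
`j ∈ D(r)` exactly when `(P r, -r) ≤ (P j, -j)` lexicographically: the sets `D(r)` are the
up-sets of the zero positions for an injective ordering, so they are strictly nested.
-/

open Finset

theorem List.sum_map_range {M : Type*} [AddCommMonoid M] (f : ℕ → M) (m : ℕ) :
    ((List.range m).map f).sum = ∑ j ∈ Finset.range m, f j := by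
  rw [Finset.sum, range_val, Multiset.range, Multiset.map_coe, Multiset.sum_coe]

theorem ZMod.sum_range_natCast {M : Type*} [AddCommMonoid M] {n : ℕ} [NeZero n]
    (f : ZMod n → M) : ∑ j ∈ range n, f j = ∑ x, f x :=
  sum_nbij' (fun j => (j : ZMod n)) ZMod.val (fun _ _ => mem_univ _)
    (fun x _ => mem_range.2 x.val_lt)
    (fun _ hj => ZMod.val_natCast_of_lt (mem_range.1 hj))
    (fun x _ => ZMod.natCast_zmod_val x) (fun _ _ => rfl)

theorem ZMod.val_add_val_sub {n : ℕ} [NeZero n] (r s : ZMod n) :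
    r.val + (s - r).val = s.val + if r.val ≤ s.val then 0 else n := by
  have hs : s = r + (s - r) := (add_sub_cancel r s).symm
  have hd := (s - r).val_lt
  by_cases h : r.val + (s - r).val < n
  · have := ZMod.val_add_of_lt h
    rw [← hs] at this
    rw [if_pos (by omega)]
    omega
  · have := ZMod.val_add_val_of_le (not_lt.1 h)
    rw [← hs] at this
    rw [if_neg (by omega)]
    omega

theorem Set.sep_le_ssubset_sep_le_of_lt {α β : Type*} [Preorder β] {S : Set α} {f : α → β}
    {r s : α} (hr : r ∈ S) (h : f r < f s) : {j ∈ S | f s ≤ f j} ⊂ {j ∈ S | f r ≤ f j} := by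
  have hsub : {j ∈ S | f s ≤ f j} ⊆ {j ∈ S | f r ≤ f j} := fun j hj => ⟨hj.1, h.le.trans hj.2⟩
  exact (ssubset_iff_of_subset hsub).2 ⟨r, ⟨hr, le_rfl⟩, fun hr' => hr'.2.not_gt h⟩

theorem Set.sep_le_ssubset_or_ssubset {α β : Type*} [LinearOrder β] {S : Set α} {f : α → β}
    (hf : Function.Injective f) {r s : α} (hr : r ∈ S) (hs : s ∈ S) (hne : r ≠ s) :
    {j ∈ S | f r ≤ f j} ⊂ {j ∈ S | f s ≤ f j} ∨ {j ∈ S | f s ≤ f j} ⊂ {j ∈ S | f r ≤ f j} :=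
  (hf.ne hne).lt_or_gt.symm.imp (sep_le_ssubset_sep_le_of_lt hs)
    (sep_le_ssubset_sep_le_of_lt hr)

namespace Arrangement

def weight (q : ℕ) (b : Bool) : ℤ := if b then -q else 1

theorem sum_map_weight (q : ℕ) (I : List Bool) :
    (I.map (weight q)).sum = I.count false - q * I.count true := by
  induction I with
  | nil => simp
  | cons b I ih => cases b <;> simp [weight, ih] <;> ring

theorem qGood_iff_sum_map_weight_pos (q : ℕ) (I : List Bool) :
    QGood q I ↔ 0 < (I.map (weight q)).sum := by
  rw [QGood, sum_map_weight, sub_pos]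
  exact_mod_cast Iff.rfl

theorem sum_weight_eq_card_sub {α : Type*} [Fintype α] (q : ℕ) (a : α → Bool) :
    ∑ x, weight q (a x) = Fintype.card α - (q + 1) * Nat.card {i | a i = true} := by
  have hw : ∀ b, weight q b = 1 - (q + 1) * if b = true then 1 else 0 := by
    intro b; cases b <;> simp [weight]
  classical
  simp only [hw, sum_sub_distrib, ← mul_sum, sum_boole, sum_const, card_univ,
    Set.coe_ofPred, Nat.card_eq_fintype_card, Fintype.card_subtype, nsmul_eq_mul, mul_one]

theorem val_add_length_interval {n : ℕ} [NeZero n] (a : ZMod n → Bool) (r s : ZMod n) :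
    r.val + (interval a r s).length = s.val + if r.val < s.val then 0 else n := by
  rw [interval, List.length_map, List.length_range]
  split_ifs with hsr hlt hlt
  · exact absurd hlt (hsr ▸ lt_irrefl _)
  · rw [hsr]
  · rw [ZMod.val_add_val_sub, if_pos hlt.le]
  · have hne : r.val ≠ s.val := fun h => hsr (ZMod.val_injective n h).symm
    rw [ZMod.val_add_val_sub, if_neg (by omega)]

variable {n : ℕ} [NeZero n]

def prefixWeight (q : ℕ) (a : ZMod n → Bool) (t : ℕ) : ℤ :=
  ∑ j ∈ range t, weight q (a (j + 1 : ℕ))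

theorem prefixWeight_add_modulus (q : ℕ) (a : ZMod n → Bool) (t : ℕ) :
    prefixWeight q a (t + n) = prefixWeight q a t + ∑ x, weight q (a x) := by
  rw [prefixWeight, prefixWeight, sum_range_add,
    ← Equiv.sum_comp (Equiv.addLeft ((t + 1 : ℕ) : ZMod n)), ← ZMod.sum_range_natCast]
  congr 2 with j
  simp only [Equiv.coe_addLeft]
  push_cast
  ring_nf

theorem sum_map_weight_interval (q : ℕ) (a : ZMod n → Bool) (r s : ZMod n) :
    ((interval a r s).map (weight q)).sum = prefixWeight q a s.val - prefixWeight q a r.val +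
      if r.val < s.val then 0 else ∑ x, weight q (a x) := by
  have hsplit : prefixWeight q a (r.val + (interval a r s).length) =
      prefixWeight q a r.val + ((interval a r s).map (weight q)).sum := by
    rw [interval, List.length_map, List.length_range, List.map_map, List.sum_map_range,
      prefixWeight, prefixWeight, sum_range_add]
    congr 1
    refine sum_congr rfl fun j _ => ?_
    simp only [Function.comp_apply]
    push_cast
    rw [ZMod.natCast_zmod_val]
    ring_nf
  rw [val_add_length_interval] at hsplit
  split_ifs at hsplit ⊢
  · rw [add_zero] at hsplit; linarith
  · rw [prefixWeight_add_modulus] at hsplit; linarith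

def key (q : ℕ) (a : ZMod n → Bool) (x : ZMod n) : ℤ ×ₗ ℕᵒᵈ :=
  toLex (prefixWeight q a x.val, OrderDual.toDual x.val)

theorem key_injective (q : ℕ) (a : ZMod n → Bool) : Function.Injective (key q a) :=
  fun _ _ h => ZMod.val_injective n (congrArg (fun p => OrderDual.ofDual (ofLex p).2) h)

theorem mem_Dset_iff {q : ℕ} {a : ZMod n → Bool} (htotal : ∑ x, weight q (a x) = 1)
    {r j : ZMod n} : j ∈ Dset q a r ↔ a j = false ∧ key q a r ≤ key q a j := by
  rw [Dset, Set.mem_ofPred_eq, qGood_iff_sum_map_weight_pos, sum_map_weight_interval, htotal]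
  refine and_congr_right fun _ => ?_
  rw [key, key, Prod.Lex.toLex_le_toLex, OrderDual.toDual_le_toDual]
  split_ifs <;> constructor <;> intro h <;> omega

end Arrangement

open Arrangement in
/-- Let `a` be a `(k, qk+1)`-arrangement. Then `r ∈ D(r)` for every zero position `r`,
the sets `D(r)` over the zero positions are pairwise distinct, and they are linearly
ordered by inclusion: for zero positions `r ≠ s`, either `D(r) ⊊ D(s)` or `D(s) ⊊ D(r)`. -/
theorem Dsets_distinct_and_nested (q k : ℕ) (a : ZMod ((q + 1) * k + 1) → Bool)
    (hones : Nat.card {i : ZMod ((q + 1) * k + 1) | a i = true} = k) :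
    (∀ r : ZMod ((q + 1) * k + 1), a r = false → r ∈ Dset q a r) ∧
      (∀ r s : ZMod ((q + 1) * k + 1), a r = false → a s = false → r ≠ s →
        Dset q a r ≠ Dset q a s) ∧
      (∀ r s : ZMod ((q + 1) * k + 1), a r = false → a s = false → r ≠ s →
        Dset q a r ⊂ Dset q a s ∨ Dset q a s ⊂ Dset q a r) := by
  have htotal : ∑ x, weight q (a x) = 1 := by
    rw [sum_weight_eq_card_sub, hones, ZMod.card]
    push_cast
    ring
  have hD (r) : Dset q a r = {j ∈ {j | a j = false} | key q a r ≤ key q a j} :=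
    Set.ext fun _ => mem_Dset_iff htotal
  have nested (r s) (hr : a r = false) (hs : a s = false) (hne : r ≠ s) :
      Dset q a r ⊂ Dset q a s ∨ Dset q a s ⊂ Dset q a r := by
    rw [hD, hD]
    exact Set.sep_le_ssubset_or_ssubset (key_injective q a) hr hs hne
  refine ⟨fun r hr => by rw [hD]; exact ⟨hr, le_rfl⟩, fun r s hr hs hne => ?_, nested⟩
  rcases nested r s hr hs hne with h | h
  exacts [h.ne, h.ne.symm]
end

section
/- (Chung–Feller) Let n ≥ 0 and let l be an integer with 0 ≤ l ≤ n. The number of sequences of n A's and n B's for which there are exactly l indices i ∈ {1, …, n} such that the i-th A (in left-to-right order) occurs at an earlier position than the i-th B equals (1/(n+1)) · binom(2n, n); equivalently, for a uniformly random such sequence the probability of exactly l such indices is 1/(n+1). -/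
/-- The (0-based) positions of the occurrences of `x` in the list `w`, in
increasing order. -/
def occPositions (w : List Bool) (x : Bool) : List ℕ :=
  (List.range w.length).filter (fun m => w.getD m (!x) == x)

/-!
Read `true` as an up-step and `false` as a down-step. The `i`-th `true` precedes the `i`-th
`false` exactly when the `i`-th down-step ends at height `≥ 0`, so the statistic counts the
down-steps that stay weakly above the axis.

Cycle lemma: a word `v` with `n` up-steps and `n + 1` down-steps can be cut as
`v = x ++ false :: y` in `n + 1` ways, and the balanced words `y ++ x` have pairwise distinct
statistics, all in `{0, …, n}`; so exactly one cut gives statistic `L`. Hence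
`(u, j) ↦ u.drop j ++ false :: u.take j` is a bijection from the balanced words of statistic `L`
times `Fin (2n + 1)` onto such `v`, and
`(2n + 1) · N = C(2n + 1, n) = (2n + 1) / (n + 1) · C(2n, n)`.
-/

lemma List.getD_append_singleton {α : Type*} (l : List α) (a d : α) (i : ℕ) :
    (l ++ [a]).getD i d = if i = l.length then a else l.getD i d := by
  rcases lt_trichotomy i l.length with hi | rfl | hi
  · rw [if_neg hi.ne, List.getD_append _ _ _ _ hi]
  · simp
  · have : (l ++ [a]).length ≤ i := by rw [List.length_append, List.length_singleton]; omega
    rw [if_neg hi.ne', List.getD_eq_default _ _ this, List.getD_eq_default _ _ hi.le]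

lemma List.finite_length_eq_and {α : Type*} [Finite α] (m : ℕ) (p : List α → Prop) :
    Finite {v : List α // v.length = m ∧ p v} :=
  Finite.of_injective (β := List.Vector α m) (fun v => ⟨v.1, v.2.1⟩)
    fun _ _ h => Subtype.ext (congrArg List.Vector.toList h)

namespace ChungFeller

def height (u : List Bool) : ℤ := u.count true - u.count false

@[simp] lemma height_nil : height [] = 0 := rfl

@[simp] lemma height_cons (b : Bool) (u : List Bool) :
    height (b :: u) = height u + if b then 1 else -1 := by
  cases b <;>
    simp only [height, List.count_cons_self, List.count_cons_of_ne, ne_eq, Bool.false_eq_true,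
      Bool.true_eq_false, not_false_eq_true, Nat.cast_add, Nat.cast_one, ↓reduceIte] <;> ring

@[simp] lemma height_append (u v : List Bool) : height (u ++ v) = height u + height v := by
  simp only [height, List.count_append]; push_cast; ring

lemma height_eq_neg_one {v : List Bool} {n : ℕ} (hlen : v.length = 2 * n + 1)
    (hcount : v.count true = n) : height v = -1 := by
  have := List.count_true_add_count_false v
  simp only [height]; omega

def downsAbove : List Bool → ℤ → ℕ
  | [], _ => 0
  | true :: u, c => downsAbove u (c + 1)
  | false :: u, c => (if 0 < c then 1 else 0) + downsAbove u (c - 1)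

lemma downsAbove_append (u v : List Bool) (c : ℤ) :
    downsAbove (u ++ v) c = downsAbove u c + downsAbove v (c + height u) := by
  induction u generalizing c with
  | nil => simp [downsAbove]
  | cons b u ih =>
    cases b <;> simp only [List.cons_append, downsAbove, ih, height_cons] <;>
      simp only [Bool.false_eq_true, if_false, if_true] <;> ring_nf

lemma downsAbove_mono (u : List Bool) {c c' : ℤ} (h : c ≤ c') :
    downsAbove u c ≤ downsAbove u c' := by
  induction u generalizing c c' with
  | nil => exact le_rfl
  | cons b u ih =>
    cases b
    · have := ih (show c - 1 ≤ c' - 1 by omega)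
      simp only [downsAbove]; split_ifs <;> omega
    · exact ih (by omega)

lemma downsAbove_le_count_false (u : List Bool) (c : ℤ) : downsAbove u c ≤ u.count false := by
  induction u generalizing c with
  | nil => exact le_rfl
  | cons b u ih =>
    cases b
    · have := ih (c - 1); simp only [downsAbove, List.count_cons_self]; split_ifs <;> omega
    · simpa [downsAbove] using ih (c + 1)

lemma occPositions_append_singleton (w : List Bool) (b x : Bool) :
    occPositions (w ++ [b]) x = occPositions w x ++ if b = x then [w.length] else [] := by
  rw [occPositions, List.length_append, List.length_singleton, List.range_succ,
    List.filter_append, occPositions]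
  congr 1
  · refine List.filter_congr fun m hm => ?_
    rw [List.getD_append _ _ _ _ (List.mem_range.1 hm)]
  · cases b <;> cases x <;> simp

lemma length_occPositions (w : List Bool) (x : Bool) : (occPositions w x).length = w.count x := by
  induction w using List.reverseRecOn with
  | nil => rfl
  | append_singleton w b ih =>
    rw [occPositions_append_singleton, List.count_append, ← ih]
    cases b <;> cases x <;> simp

lemma lt_length_of_mem_occPositions {w : List Bool} {x : Bool} {m : ℕ}
    (h : m ∈ occPositions w x) : m < w.length :=
  List.mem_range.1 (List.mem_filter.1 h).1

lemma getD_occPositions_le (w : List Bool) (x : Bool) (i : ℕ) :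
    (occPositions w x).getD i 0 ≤ w.length := by
  rcases lt_or_ge i (occPositions w x).length with hi | hi
  · rw [List.getD_eq_getElem _ _ hi]
    exact (lt_length_of_mem_occPositions (List.getElem_mem hi)).le
  · rw [List.getD_eq_default _ _ hi]; omega

/-- An index `i` with no `i`-th `false` never qualifies: `getD` then returns `0`. -/
def precedingIndices (w : List Bool) : Finset ℕ :=
  (Finset.range (w.count true)).filter fun i =>
    (occPositions w true).getD i 0 < (occPositions w false).getD i 0

lemma precedingIndices_append_true (w : List Bool) :
    precedingIndices (w ++ [true]) = precedingIndices w := by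
  have hT := length_occPositions w true
  rw [precedingIndices, occPositions_append_singleton, occPositions_append_singleton,
    show (w ++ [true]).count true = w.count true + 1 by simp, Finset.range_add_one,
    Finset.filter_insert]
  simp only [Bool.true_eq_false, if_false, if_true, List.append_nil, List.getD_append_singleton, hT]
  rw [if_neg (getD_occPositions_le w false _).not_gt, precedingIndices]
  exact Finset.filter_congr fun i hi => by rw [if_neg (Finset.mem_range.1 hi).ne]

lemma card_precedingIndices_append_false (w : List Bool) :
    (precedingIndices (w ++ [false])).card =
      (precedingIndices w).card + if 0 < height w then 1 else 0 := by
  have hT := length_occPositions w true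
  have hF := length_occPositions w false
  have hj : ¬ (occPositions w true).getD (w.count false) 0 <
      (occPositions w false).getD (w.count false) 0 := by
    rw [List.getD_eq_default _ _ hF.le]; omega
  -- only the index of the new `false` changes status, and it qualifies iff it is `< count true`
  have hstep : ∀ i ∈ Finset.range (w.count true),
      (occPositions w true).getD i 0 < (occPositions w false).getD i 0 ∨ i = w.count false ↔
        (occPositions w true).getD i 0 <
          (if i = w.count false then w.length else (occPositions w false).getD i 0) := by
    intro i hi
    by_cases hij : i = w.count false
    · subst hij
      rw [if_pos rfl, List.getD_eq_getElem _ _ (by simpa [hT] using hi)]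
      simpa using lt_length_of_mem_occPositions (List.getElem_mem _)
    · simp [hij]
  rw [precedingIndices, occPositions_append_singleton, occPositions_append_singleton,
    show (w ++ [false]).count true = w.count true by simp]
  simp only [if_true, if_false, Bool.false_eq_true, List.append_nil, List.getD_append_singleton, hF]
  rw [← Finset.filter_congr hstep, Finset.filter_or, Finset.card_union_of_disjoint
    (Finset.disjoint_filter.2 fun i _ hi hij => hj (by rwa [← hij])), Finset.filter_eq',
    precedingIndices]
  simp only [apply_ite Finset.card, Finset.card_singleton, Finset.card_empty, Finset.mem_range,
    height, sub_pos, Nat.cast_lt]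

lemma card_precedingIndices (w : List Bool) : (precedingIndices w).card = downsAbove w 0 := by
  induction w using List.reverseRecOn with
  | nil => rfl
  | append_singleton w b ih =>
    rw [downsAbove_append, zero_add, ← ih]
    cases b
    · simp [card_precedingIndices_append_false, downsAbove]
    · simp [precedingIndices_append_true, downsAbove]

/-- The sign of `height m` decides, term by term, which side is larger. -/
lemma downsAbove_rotate_ne (x m y : List Bool) (h : height x + height m + height y = 1) :
    downsAbove (m ++ false :: y ++ x) 0 ≠ downsAbove (y ++ (x ++ false :: m)) 0 := by
  simp only [downsAbove_append, downsAbove, height_cons, height_append]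
  simp only [Bool.false_eq_true, if_false, zero_add]
  rw [show height m + (height y + -1) = -height x by omega,
    show height y + height x - 1 = -height m by omega,
    show height y + height x = 1 - height m by omega]
  have hx := downsAbove_mono x (c := -height x) (c' := height y)
  have hy := downsAbove_mono y (c := height m - 1) (c' := 0)
  have hm := downsAbove_mono m (c := -height m) (c' := 0)
  have hx' := downsAbove_mono x (c := height y) (c' := -height x)
  have hy' := downsAbove_mono y (c := 0) (c' := height m - 1)
  have hm' := downsAbove_mono m (c := 0) (c' := -height m)
  split_ifs <;> omega

lemma cut_eq_of_downsAbove_eq {x y x' y' : List Bool} (hv : height (x ++ false :: y) = -1)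
    (heq : x ++ false :: y = x' ++ false :: y')
    (hd : downsAbove (y ++ x) 0 = downsAbove (y' ++ x') 0) : x = x' ∧ y = y' := by
  rcases List.append_eq_append_iff.1 heq with ⟨a, rfl, ha⟩ | ⟨a, rfl, ha⟩
  · rcases a with _ | ⟨_, m⟩
    · simpa using ha
    · obtain ⟨rfl, rfl⟩ : _ = false ∧ y = m ++ false :: y' := by simpa [eq_comm] using ha
      exact absurd hd (downsAbove_rotate_ne x m y' (by simp at hv; omega))
  · rcases a with _ | ⟨_, m⟩
    · simpa [eq_comm] using ha
    · obtain ⟨rfl, rfl⟩ : _ = false ∧ y' = m ++ false :: y := by simpa [eq_comm] using ha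
      exact absurd hd.symm (downsAbove_rotate_ne x' m y (by simp at hv; omega))

def falseCuts : List Bool → List (List Bool × List Bool)
  | [] => []
  | b :: v => (if b then [] else [([], v)]) ++ (falseCuts v).map (Prod.map (b :: ·) id)

lemma mem_falseCuts {v : List Bool} {p : List Bool × List Bool} :
    p ∈ falseCuts v ↔ p.1 ++ false :: p.2 = v := by
  induction v generalizing p with
  | nil => simp [falseCuts]
  | cons b v ih =>
    obtain ⟨x, y⟩ := p
    cases x <;> cases b <;> simp [falseCuts, ih, and_comm]

lemma length_falseCuts (v : List Bool) : (falseCuts v).length = v.count false := by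
  induction v with
  | nil => rfl
  | cons b v ih => cases b <;> simp [falseCuts, ih]

lemma nodup_falseCuts (v : List Bool) : (falseCuts v).Nodup := by
  induction v with
  | nil => exact List.nodup_nil
  | cons b v ih =>
    have hmap := ih.map (f := Prod.map (b :: ·) id)
      (Prod.map_injective.2 ⟨List.cons_injective, Function.injective_id⟩)
    cases b <;> simpa [falseCuts] using hmap

/-- Cycle lemma, by pigeonhole: the `v.count false` cuts of `v` have pairwise distinct statistics,
all below `v.count false`. -/
lemma exists_cut_downsAbove_eq {v : List Bool} (hv : height v = -1) {L : ℕ}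
    (hL : L < v.count false) : ∃ x y, x ++ false :: y = v ∧ downsAbove (y ++ x) 0 = L := by
  have hmaps : ∀ p ∈ (falseCuts v).toFinset,
      downsAbove (p.2 ++ p.1) 0 ∈ Finset.range (v.count false) := by
    intro p hp
    rw [List.mem_toFinset, mem_falseCuts] at hp
    have := downsAbove_le_count_false (p.2 ++ p.1) 0
    rw [Finset.mem_range, ← hp]
    simp only [List.count_append, List.count_cons_self] at this ⊢
    omega
  have hinj : ∀ p ∈ (falseCuts v).toFinset, ∀ p' ∈ (falseCuts v).toFinset,
      downsAbove (p.2 ++ p.1) 0 = downsAbove (p'.2 ++ p'.1) 0 → p = p' := by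
    intro p hp p' hp' hd
    rw [List.mem_toFinset, mem_falseCuts] at hp hp'
    obtain ⟨h1, h2⟩ := cut_eq_of_downsAbove_eq (hp ▸ hv) (hp.trans hp'.symm) hd
    exact Prod.ext h1 h2
  have hcard : (Finset.range (v.count false)).card ≤ (falseCuts v).toFinset.card := by
    rw [List.toFinset_card_of_nodup (nodup_falseCuts v), length_falseCuts, Finset.card_range]
  obtain ⟨⟨x, y⟩, hp, hL⟩ := Finset.surj_on_of_inj_on_of_card_le _ hmaps
    (fun p p' hp hp' => hinj p hp p' hp') hcard L (Finset.mem_range.2 hL)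
  exact ⟨x, y, mem_falseCuts.1 (List.mem_toFinset.1 hp), hL.symm⟩

def consEquiv (m k : ℕ) :
    {v : List Bool // v.length = m + 1 ∧ v.count true = k} ≃
      {u : List Bool // u.length = m ∧ u.count true = k} ⊕
        {u : List Bool // u.length = m ∧ u.count true + 1 = k} where
  toFun
    | ⟨false :: u, h⟩ => .inl ⟨u, by simpa using h⟩
    | ⟨true :: u, h⟩ => .inr ⟨u, by simpa using h⟩
  invFun
    | .inl u => ⟨false :: u.1, by simpa using u.2⟩
    | .inr u => ⟨true :: u.1, by simpa using u.2⟩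
  left_inv := by
    rintro ⟨_ | ⟨_ | _, u⟩, h⟩
    · simp at h
    all_goals rfl
  right_inv := by rintro (u | u) <;> rfl

lemma card_length_count_true (m k : ℕ) :
    Nat.card {v : List Bool // v.length = m ∧ v.count true = k} = m.choose k := by
  induction m generalizing k with
  | zero =>
    cases k with
    | zero =>
      exact Nat.card_eq_one_iff_exists.2
        ⟨⟨[], rfl, rfl⟩, fun v => Subtype.ext (List.eq_nil_of_length_eq_zero v.2.1)⟩
    | succ k =>
      have : IsEmpty {v : List Bool // v.length = 0 ∧ v.count true = k + 1} :=
        ⟨fun ⟨v, h₁, h₂⟩ => by simp_all⟩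
      rw [Nat.card_of_isEmpty, Nat.choose_zero_succ]
  | succ m ih =>
    have := List.finite_length_eq_and m (·.count true = k)
    have := List.finite_length_eq_and m (·.count true + 1 = k)
    rw [Nat.card_congr (consEquiv m k), Nat.card_sum, ih]
    cases k with
    | zero => simp
    | succ k =>
      rw [Nat.choose_succ_succ', ← ih k, add_comm]
      congr 1
      exact Nat.card_congr (Equiv.subtypeEquivRight fun u => by omega)

lemma succ_mul_card_downsAbove_eq (n L : ℕ) (hL : L ≤ n) :
    (2 * n + 1) * Nat.card {u : List Bool // u.length = 2 * n ∧ u.count true = n ∧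
      downsAbove u 0 = L} = (2 * n + 1).choose n := by
  let f : {u : List Bool // u.length = 2 * n ∧ u.count true = n ∧ downsAbove u 0 = L} ×
      Fin (2 * n + 1) → {v : List Bool // v.length = 2 * n + 1 ∧ v.count true = n} :=
    fun ⟨u, j⟩ => ⟨u.1.drop j ++ false :: u.1.take j, by
      have hcount := u.2.2.1
      rw [← List.take_append_drop j u.1, List.count_append] at hcount
      simp only [List.length_append, List.length_cons, List.length_drop, List.length_take,
        u.2.1, List.count_append, List.count_cons, beq_true, Bool.false_eq_true, ↓reduceIte,
        add_zero]
      omega⟩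
  have hf : Function.Bijective f := by
    constructor
    · rintro ⟨⟨u, hu⟩, j⟩ ⟨⟨u', hu'⟩, j'⟩ h
      have hv := height_eq_neg_one (f (⟨u, hu⟩, j)).2.1 (f (⟨u, hu⟩, j)).2.2
      obtain ⟨hdrop, htake⟩ := cut_eq_of_downsAbove_eq hv (congrArg Subtype.val h)
        (by rw [List.take_append_drop, List.take_append_drop, hu.2.2, hu'.2.2])
      obtain rfl : u = u' := by
        rw [← List.take_append_drop j u, ← List.take_append_drop j' u', hdrop, htake]
      have hj := congrArg List.length htake
      rw [List.length_take, List.length_take, hu.1] at hj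
      refine Prod.ext rfl (Fin.ext ?_)
      show (j : ℕ) = j'
      omega
    · rintro ⟨v, hlen, hcount⟩
      have hfalse := List.count_true_add_count_false v
      obtain ⟨x, y, rfl, hxy⟩ :=
        exists_cut_downsAbove_eq (height_eq_neg_one hlen hcount) (L := L) (by omega)
      simp only [List.length_append, List.length_cons, List.count_append, ne_eq,
        Bool.false_eq_true, not_false_eq_true, List.count_cons_of_ne] at hlen hcount
      refine ⟨(⟨y ++ x, ?_, ?_, hxy⟩, ⟨y.length, by omega⟩), ?_⟩
      · rw [List.length_append]; omega
      · rw [List.count_append]; omega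
      · simp [f]
  rw [← card_length_count_true, ← Nat.card_eq_of_bijective f hf, Nat.card_prod, Nat.card_fin,
    mul_comm]

end ChungFeller

/-- (Chung–Feller) Let `0 ≤ L ≤ n`. The number of sequences of `n` A's (`true`) and
`n` B's (`false`) for which there are exactly `L` indices `i ∈ {1, …, n}` such that the
`i`-th A occurs at an earlier position than the `i`-th B equals `(1/(n+1)) · C(2n, n)`;
equivalently, for a uniformly random such sequence the probability of exactly `L`
such indices is `1/(n+1)`. -/
theorem chung_feller (n L : ℕ) (hL : L ≤ n) :
    (Nat.card {w : List Bool // w.length = 2 * n ∧ w.count true = n ∧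
        ((Finset.range n).filter (fun i =>
          (occPositions w true).getD i 0 < (occPositions w false).getD i 0)).card = L} : ℚ)
      = 1 / (n + 1) * Nat.choose (2 * n) n := by
  rw [Nat.card_congr (Equiv.subtypeEquivRight (q := fun u : List Bool => u.length = 2 * n ∧
    u.count true = n ∧ ChungFeller.downsAbove u 0 = L) fun w => and_congr_right fun _ =>
      and_congr_right fun hn => by rw [← hn, ← ChungFeller.card_precedingIndices]; rfl)]
  have hmul : Nat.card {u : List Bool // u.length = 2 * n ∧ u.count true = n ∧
      ChungFeller.downsAbove u 0 = L} * (n + 1) = (2 * n).choose n := by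
    have := Nat.choose_mul_succ_eq (2 * n) n
    rw [show 2 * n + 1 - n = n + 1 by omega,
      ← ChungFeller.succ_mul_card_downsAbove_eq n L hL] at this
    exact Nat.eq_of_mul_eq_mul_left (by omega : 0 < 2 * n + 1) (by linarith)
  rw [← hmul]
  push_cast
  field_simp
end

section
/- (Stronger Cycle Lemma) Let q ≥ 0, k ≥ 0, let a be a (k, qk+1)-arrangement, and let S be a set of t ≥ 1 positions of 0's of a. For every i with 1 ≤ i ≤ t there is a unique r ∈ S such that exactly i of the intervals (r,j] with j ∈ S are q-good. Moreover, if r, s ∈ S and the number of q-good intervals (r,j] with j ∈ S is smaller than the number of q-good intervals (s,j] with j ∈ S, then every j ∈ S with (r,j] q-good also has (s,j] q-good. -/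
instance (q : ℕ) (I : List Bool) : Decidable (QGood q I) :=
  inferInstanceAs (Decidable (q * I.count true < I.count false))

namespace SCL

variable (q : ℕ)

def c (b : Bool) : ℤ := if b then -(q:ℤ) else 1

def wt (I : List Bool) : ℤ := (I.count false : ℤ) - (q:ℤ) * I.count true

lemma qgood_iff (I : List Bool) : QGood q I ↔ 1 ≤ wt q I := by
  unfold QGood wt
  rw [← Nat.cast_lt (α := ℤ)]
  push_cast
  constructor <;> intro h <;> linarith

lemma wt_append (I J : List Bool) : wt q (I ++ J) = wt q I + wt q J := by
  simp only [wt, List.count_append]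
  push_cast
  ring

lemma wt_single (b : Bool) : wt q [b] = c q b := by
  cases b <;> simp [wt, c]

lemma wt_map_range (g : ℕ → Bool) (L : ℕ) :
    wt q ((List.range L).map g) = ∑ j ∈ Finset.range L, c q (g j) := by
  induction L with
  | zero => simp [wt]
  | succ L ih =>
      rw [List.range_succ, List.map_append, wt_append, ih, Finset.sum_range_succ,
        List.map_singleton, wt_single]

section

variable (n : ℕ) [NeZero n] (a : ZMod n → Bool)

def P (m : ℕ) : ℤ := ∑ i ∈ Finset.range m, c q (a ((i + 1 : ℕ) : ZMod n))

lemma P_add (m L : ℕ) :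
    P q n a (m + L) = P q n a m + ∑ j ∈ Finset.range L, c q (a ((m + j + 1 : ℕ) : ZMod n)) := by
  induction L with
  | zero => simp [P]
  | succ L ih =>
      rw [← Nat.add_assoc, P, Finset.sum_range_succ, ← P, ih, Finset.sum_range_succ]
      ring

lemma P_n (htot : ∑ x : ZMod n, c q (a x) = 1) : P q n a n = 1 := by
  unfold P
  rw [← htot]
  apply Finset.sum_nbij' (i := fun i => ((i + 1 : ℕ) : ZMod n)) (j := fun x => (x - 1).val)
  · intro i _; exact Finset.mem_univ _
  · intro x _; have := ZMod.val_lt (x - 1); simp [Finset.mem_range, this]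
  · intro i hi
    have h1 : ((i + 1 : ℕ) : ZMod n) - 1 = ((i : ℕ) : ZMod n) := by push_cast; ring
    rw [h1, ZMod.val_cast_of_lt (Finset.mem_range.mp hi)]
  · intro x _
    have h1 : (((x - 1).val : ℕ) : ZMod n) = x - 1 := ZMod.natCast_rightInverse _
    push_cast [h1]
    ring
  · intro i _; rfl

set_option linter.unusedSectionVars false

lemma P_period (htot : ∑ x : ZMod n, c q (a x) = 1) (m : ℕ) :
    P q n a (m + n) = P q n a m + 1 := by
  induction m with
  | zero => simpa [P] using P_n q n a htot
  | succ m ih =>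
      have e2 : ((m + n + 1 : ℕ) : ZMod n) = ((m + 1 : ℕ) : ZMod n) := by
        push_cast [ZMod.natCast_self]; ring
      have h1 : P q n a (m + 1 + n) = P q n a (m + n) + c q (a ((m + n + 1 : ℕ) : ZMod n)) := by
        rw [show m + 1 + n = (m + n) + 1 from by omega, P, Finset.sum_range_succ, ← P]
      have h2 : P q n a (m + 1) = P q n a m + c q (a ((m + 1 : ℕ) : ZMod n)) := by
        rw [P, Finset.sum_range_succ, ← P]
      rw [h1, e2, ih, h2]
      ring

def h (x : ZMod n) : ℤ := P q n a x.val

lemma val_inj {x y : ZMod n} (hxy : x.val = y.val) : x = y := by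
  have hx : ((x.val : ℕ) : ZMod n) = x := ZMod.natCast_rightInverse _
  have hy : ((y.val : ℕ) : ZMod n) = y := ZMod.natCast_rightInverse _
  rw [← hx, ← hy, hxy]

lemma wt_interval (htot : ∑ x : ZMod n, c q (a x) = 1) (r s : ZMod n) :
    wt q (interval a r s) = h q n a s - h q n a r + (if r.val < s.val then 0 else 1) := by
  have hmap : ∀ j : ℕ, a (r + ((j + 1 : ℕ) : ZMod n)) = a ((r.val + j + 1 : ℕ) : ZMod n) := by
    intro j
    congr 1
    have hr : ((r.val : ℕ) : ZMod n) = r := ZMod.natCast_rightInverse _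
    push_cast [hr]
    ring
  unfold interval
  simp only [hmap]
  rw [wt_map_range]
  have key : ∀ L : ℕ, ∑ j ∈ Finset.range L, c q (a ((r.val + j + 1 : ℕ) : ZMod n)) =
      P q n a (r.val + L) - P q n a r.val := by
    intro L; rw [P_add]; ring
  by_cases hsr : s = r
  · subst hsr
    rw [if_pos rfl, key, if_neg (lt_irrefl _), P_period q n a htot]
    unfold h; ring
  · rw [if_neg hsr, key]
    rcases lt_trichotomy r.val s.val with hlt | heq | hgt
    · have hsub : (s - r).val = s.val - r.val := by
        have hv : ((s.val - r.val : ℕ) : ZMod n) = s - r := by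
          rw [Nat.cast_sub (le_of_lt hlt), ZMod.natCast_rightInverse s,
            ZMod.natCast_rightInverse r]
        rw [← hv, ZMod.val_cast_of_lt]
        have := ZMod.val_lt s; omega
      rw [hsub, if_pos hlt, show r.val + (s.val - r.val) = s.val from by omega]
      unfold h; ring
    · exact absurd (val_inj n heq).symm hsr
    · have hle : ¬ r.val < s.val := by omega
      have hs := ZMod.natCast_rightInverse (n := n) s
      have hr := ZMod.natCast_rightInverse (n := n) r
      have hsub : (s - r).val = s.val + n - r.val := by
        have hrn : r.val ≤ s.val + n := by have := ZMod.val_lt r; omega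
        have hv : ((s.val + n - r.val : ℕ) : ZMod n) = s - r := by
          rw [Nat.cast_sub hrn]
          push_cast [ZMod.natCast_self, hs, hr]
          ring
        rw [← hv, ZMod.val_cast_of_lt]
        omega
      rw [hsub, if_neg hle,
        show r.val + (s.val + n - r.val) = s.val + n from by have := ZMod.val_lt r; omega,
        P_period q n a htot]
      unfold h; ring

def F (x : ZMod n) : ℤ := (n : ℤ) * h q n a x - x.val

lemma good_iff (htot : ∑ x : ZMod n, c q (a x) = 1) (r j : ZMod n) :
    QGood q (interval a r j) ↔ F q n a r ≤ F q n a j := by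
  rw [qgood_iff, wt_interval q n a htot]
  have hrv : r.val < n := ZMod.val_lt r
  have hjv : j.val < n := ZMod.val_lt j
  have hn : (0 : ℤ) < (n : ℤ) := by exact_mod_cast Nat.pos_of_ne_zero (NeZero.ne n)
  unfold F
  set x := h q n a r with hx
  set y := h q n a j with hy
  have hrv' : (r.val : ℤ) < (n : ℤ) := by exact_mod_cast hrv
  have hjv' : (j.val : ℤ) < (n : ℤ) := by exact_mod_cast hjv
  have hrv0 : (0 : ℤ) ≤ (r.val : ℤ) := Int.natCast_nonneg _
  have hjv0 : (0 : ℤ) ≤ (j.val : ℤ) := Int.natCast_nonneg _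
  split_ifs with hlt
  · have hlt' : (r.val : ℤ) < (j.val : ℤ) := by exact_mod_cast hlt
    constructor
    · intro hw
      have : (n : ℤ) * 1 ≤ (n : ℤ) * (y - x) := by
        apply mul_le_mul_of_nonneg_left (by linarith) (le_of_lt hn)
      nlinarith
    · intro hF
      have hpos : (0 : ℤ) < (n : ℤ) * (y - x) := by nlinarith
      have h2 : (0 : ℤ) < y - x := by
        by_contra hcon
        have : y - x ≤ 0 := by linarith
        nlinarith
      have h3 := Int.lt_iff_add_one_le.mp h2
      linarith
  · have hge' : (j.val : ℤ) ≤ (r.val : ℤ) := by exact_mod_cast Nat.le_of_not_lt hlt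
    constructor
    · intro hw
      have h0 : (0 : ℤ) ≤ y - x := by linarith
      nlinarith
    · intro hF
      have hkey : -(n : ℤ) < (n : ℤ) * (y - x) := by nlinarith
      by_contra hcon
      have : y - x ≤ -1 := by linarith
      nlinarith

lemma F_inj (r j : ZMod n) (hF : F q n a r = F q n a j) : r = j := by
  have hrv : r.val < n := ZMod.val_lt r
  have hjv : j.val < n := ZMod.val_lt j
  have hn : (0 : ℤ) < (n : ℤ) := by exact_mod_cast Nat.pos_of_ne_zero (NeZero.ne n)
  have hrv' : (r.val : ℤ) < (n : ℤ) := by exact_mod_cast hrv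
  have hjv' : (j.val : ℤ) < (n : ℤ) := by exact_mod_cast hjv
  have hrv0 : (0 : ℤ) ≤ (r.val : ℤ) := Int.natCast_nonneg _
  have hjv0 : (0 : ℤ) ≤ (j.val : ℤ) := Int.natCast_nonneg _
  unfold F at hF
  have heq : (n : ℤ) * (h q n a r - h q n a j) = (r.val : ℤ) - (j.val : ℤ) := by linarith
  have hd : h q n a r = h q n a j := by
    by_contra hne
    rcases lt_or_gt_of_ne hne with hlt | hgt
    · have : h q n a r - h q n a j ≤ -1 := by linarith
      nlinarith
    · have : (1 : ℤ) ≤ h q n a r - h q n a j := by linarith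
      nlinarith
  have : (r.val : ℤ) = (j.val : ℤ) := by rw [hd] at heq; linarith
  exact val_inj n (by exact_mod_cast this)

lemma sum_c (k : ℕ) (hn : n = (q + 1) * k + 1)
    (hcardtrue : (Finset.univ.filter (fun x : ZMod n => a x = true)).card = k) :
    ∑ x : ZMod n, c q (a x) = 1 := by
  have hc : ∀ b : Bool, c q b = 1 - ((q : ℤ) + 1) * (if b = true then 1 else 0) := by
    intro b; cases b <;> simp [c] <;> ring
  have hsum : ∑ x : ZMod n, c q (a x)
      = ∑ x : ZMod n, (1 - ((q : ℤ) + 1) * (if a x = true then 1 else 0)) := by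
    simp_rw [hc]
  rw [hsum, Finset.sum_sub_distrib, Finset.sum_const, ← Finset.mul_sum, Finset.sum_boole,
    hcardtrue, Finset.card_univ, ZMod.card, hn]
  push_cast
  ring

end
end SCL

/-- (Stronger Cycle Lemma) Let `a` be a `(k, qk+1)`-arrangement and let `S` be a set of
`t ≥ 1` zero positions of `a`. For every `i` with `1 ≤ i ≤ t` there is a unique `r ∈ S`
such that exactly `i` of the intervals `(r, j]` with `j ∈ S` are `q`-good. Moreover,
if `r, s ∈ S` and the number of `q`-good intervals `(r, j]` with `j ∈ S` is smaller than
the number of `q`-good intervals `(s, j]` with `j ∈ S`, then every `j ∈ S` with `(r, j]`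
`q`-good also has `(s, j]` `q`-good. -/
theorem stronger_cycle_lemma (q k t : ℕ) (a : ZMod ((q + 1) * k + 1) → Bool)
    (hones : Nat.card {i : ZMod ((q + 1) * k + 1) | a i = true} = k)
    (S : Finset (ZMod ((q + 1) * k + 1))) (hS : ∀ j ∈ S, a j = false)
    (hcard : S.card = t) (ht : 1 ≤ t) :
    (∀ i : ℕ, 1 ≤ i → i ≤ t → ∃! r, r ∈ S ∧
        (S.filter (fun j => QGood q (interval a r j))).card = i) ∧
      (∀ r ∈ S, ∀ s ∈ S,
        (S.filter (fun j => QGood q (interval a r j))).card <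
          (S.filter (fun j => QGood q (interval a s j))).card →
        ∀ j ∈ S, QGood q (interval a r j) → QGood q (interval a s j)) := by
  have hcardtrue : (Finset.univ.filter (fun x : ZMod ((q + 1) * k + 1) => a x = true)).card = k := by
    have e : Nat.card {i : ZMod ((q + 1) * k + 1) | a i = true}
        = (Finset.univ.filter (fun x : ZMod ((q + 1) * k + 1) => a x = true)).card := by
      rw [Nat.card_eq_fintype_card, ← Set.toFinset_card, Set.toFinset_setOf]
    exact e.symm.trans hones
  have htot : ∑ x : ZMod ((q + 1) * k + 1), SCL.c q (a x) = 1 := SCL.sum_c q ((q + 1) * k + 1) a k rfl hcardtrue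
  have hgood : ∀ r j : ZMod ((q + 1) * k + 1), QGood q (interval a r j) ↔ SCL.F q ((q + 1) * k + 1) a r ≤ SCL.F q ((q + 1) * k + 1) a j :=
    SCL.good_iff q ((q + 1) * k + 1) a htot
  have hfilter : ∀ r : ZMod ((q + 1) * k + 1), S.filter (fun j => QGood q (interval a r j))
      = S.filter (fun j => SCL.F q ((q + 1) * k + 1) a r ≤ SCL.F q ((q + 1) * k + 1) a j) := by
    intro r
    exact Finset.filter_congr (fun j _ => by simpa using hgood r j)
  set cnt : ZMod ((q + 1) * k + 1) → ℕ := fun r => (S.filter (fun j => SCL.F q ((q + 1) * k + 1) a r ≤ SCL.F q ((q + 1) * k + 1) a j)).card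
    with hcnt
  have hmono : ∀ r s : ZMod ((q + 1) * k + 1), SCL.F q ((q + 1) * k + 1) a s ≤ SCL.F q ((q + 1) * k + 1) a r →
      S.filter (fun j => SCL.F q ((q + 1) * k + 1) a r ≤ SCL.F q ((q + 1) * k + 1) a j)
        ⊆ S.filter (fun j => SCL.F q ((q + 1) * k + 1) a s ≤ SCL.F q ((q + 1) * k + 1) a j) :=
    by
    intro r s hrs j hj
    rw [Finset.mem_filter] at hj ⊢
    exact ⟨hj.1, le_trans hrs hj.2⟩
  have hstrict : ∀ r ∈ S, ∀ s ∈ S, SCL.F q ((q + 1) * k + 1) a s < SCL.F q ((q + 1) * k + 1) a r → cnt r < cnt s := by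
    intro r hr s hs hlt
    apply Finset.card_lt_card
    rw [Finset.ssubset_iff_of_subset (hmono r s (le_of_lt hlt))]
    exact ⟨s, Finset.mem_filter.mpr ⟨hs, le_refl _⟩,
      fun hmem => absurd ((Finset.mem_filter.mp hmem).2) (not_le.mpr hlt)⟩
  have hlow : ∀ r ∈ S, 1 ≤ cnt r := by
    intro r hr
    exact Nat.one_le_iff_ne_zero.mpr (Finset.card_ne_zero_of_mem
      (Finset.mem_filter.mpr ⟨hr, le_refl _⟩))
  have hhigh : ∀ r ∈ S, cnt r ≤ t := by
    intro r hr
    calc cnt r ≤ S.card := Finset.card_filter_le _ _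
    _ = t := hcard
  have hinj : Set.InjOn cnt S := by
    intro r hr s hs hcnteq
    by_contra hne
    have hFne : SCL.F q ((q + 1) * k + 1) a r ≠ SCL.F q ((q + 1) * k + 1) a s := fun hF => hne (SCL.F_inj q ((q + 1) * k + 1) a r s hF)
    rcases lt_or_gt_of_ne hFne with hlt | hgt
    · exact absurd hcnteq (Nat.ne_of_gt (hstrict s hs r hr hlt))
    · exact absurd hcnteq (Nat.ne_of_lt (hstrict r hr s hs hgt))
  have hC : S.image cnt = Finset.Icc 1 t := by
    apply Finset.eq_of_subset_of_card_le
    · intro i hi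
      rcases Finset.mem_image.mp hi with ⟨r, hr, rfl⟩
      exact Finset.mem_Icc.mpr ⟨hlow r hr, hhigh r hr⟩
    · rw [Nat.card_Icc, Finset.card_image_of_injOn hinj, hcard]
      omega
  constructor
  · intro i hi1 hi2
    have hiC : i ∈ S.image cnt := hC ▸ Finset.mem_Icc.mpr ⟨hi1, hi2⟩
    rcases Finset.mem_image.mp hiC with ⟨r, hr, hri⟩
    refine ⟨r, ⟨hr, by rw [hfilter r]; exact hri⟩, ?_⟩
    intro y ⟨hy, hyi⟩
    rw [hfilter y] at hyi
    exact hinj hy hr (hyi.trans hri.symm)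
  · intro r hr s hs hlt j hj hgj
    rw [hfilter r, hfilter s] at hlt
    have hFsr : SCL.F q ((q + 1) * k + 1) a s ≤ SCL.F q ((q + 1) * k + 1) a r := by
      by_contra hcon
      exact absurd hlt (not_lt.mpr (Finset.card_le_card (hmono s r (le_of_lt (not_le.mp hcon)))))
    exact (hgood s j).mpr (le_trans hFsr ((hgood r j).mp hgj))
end

section
/- (Montágh) Let n ≥ 1 and let a : ℤ/nℤ → ℤ be a cyclic arrangement of n integers whose sum is +1. For every integer l with 1 ≤ l ≤ n there is a unique r ∈ ℤ/nℤ such that the linearization b_j = a_{r+j} (j = 1, …, n) has exactly l positive partial sums, i.e. exactly l indices j ∈ {1, …, n} with b_1 + b_2 + ⋯ + b_j > 0. -/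
/-- (Montágh) Let `n ≥ 1` and let `a : ZMod n → ℤ` be a cyclic arrangement of `n`
integers whose sum is `+1`. For every `l` with `1 ≤ l ≤ n` there is a unique position
`r` such that the linearization `b_j = a (r+j)` (`j = 1, …, n`) has exactly `l`
positive partial sums `b_1 + ⋯ + b_j`. -/
theorem montagh (n : ℕ) (hn : 1 ≤ n) (a : ZMod n → ℤ)
    (hsum : ∑ j ∈ Finset.range n, a ((j : ℕ) : ZMod n) = 1)
    (l : ℕ) (hl1 : 1 ≤ l) (hln : l ≤ n) :
    ∃! r : ZMod n,
      ((Finset.Icc 1 n).filter (fun j =>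
        0 < ∑ t ∈ Finset.Icc 1 j, a (r + ((t : ℕ) : ZMod n)))).card = l := by
  haveI : NeZero n := ⟨by omega⟩
  classical
  set S : ℕ → ℤ := fun k => ∑ t ∈ Finset.range k, a ((t : ℕ) : ZMod n) with hSdef
  have hS0 : S 0 = 0 := by simp [hSdef]
  have hstep : ∀ k : ℕ, S (k + 1) = S k + a ((k : ℕ) : ZMod n) := by
    intro k; simp [hSdef, Finset.sum_range_succ]
  have hval : ∀ r : ZMod n, ((r.val : ℕ) : ZMod n) = r := fun r =>
    ZMod.natCast_rightInverse r
  have hper : ∀ k : ℕ, S (k + n) = S k + 1 := by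
    intro k
    induction k with
    | zero => simpa [hS0] using hsum
    | succ k ih =>
      have h2 : ((k + n : ℕ) : ZMod n) = ((k : ℕ) : ZMod n) := by
        push_cast; simp
      calc S (k + 1 + n) = S (k + n) + a ((k + n : ℕ) : ZMod n) := by
            rw [show k + 1 + n = k + n + 1 by ring]; exact hstep (k + n)
        _ = S (k + 1) + 1 := by rw [h2, ih, hstep k]; ring
  set K : ℕ → ℤ := fun k => n * S k - k with hKdef
  have hKper : ∀ k : ℕ, K (k + n) = K k := by
    intro k; simp only [hKdef, hper]; push_cast; ring
  have hKadd : ∀ (k m : ℕ), K (k + m * n) = K k := by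
    intro k m
    induction m with
    | zero => simp
    | succ m ih =>
      have : k + (m + 1) * n = k + m * n + n := by ring
      rw [this, hKper, ih]
  have hKcong : ∀ k k' : ℕ, ((k : ZMod n) = (k' : ZMod n)) → K k = K k' := by
    intro k k' h
    rw [ZMod.natCast_eq_natCast_iff'] at h
    have e1 : K k = K (k % n) := by
      conv_lhs => rw [← Nat.mod_add_div' k n]
      exact hKadd _ _
    have e2 : K k' = K (k' % n) := by
      conv_lhs => rw [← Nat.mod_add_div' k' n]
      exact hKadd _ _
    rw [e1, e2, h]
  set Key : ZMod n → ℤ := fun c => K (c.val + 1) with hKeydef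
  have hKeyinj : Function.Injective Key := by
    intro c c' h
    simp only [hKeydef, hKdef] at h
    have hdvd : (n : ℤ) ∣ ((c.val : ℤ) - (c'.val : ℤ)) := by
      refine ⟨S (c.val + 1) - S (c'.val + 1), ?_⟩
      push_cast at h ⊢
      linarith
    have habs : |((c.val : ℤ) - (c'.val : ℤ))| < n := by
      have h1 : c.val < n := ZMod.val_lt c
      have h2 : c'.val < n := ZMod.val_lt c'
      rw [abs_lt]
      constructor <;> [push_cast; push_cast] <;> omega
    have := Int.eq_zero_of_abs_lt_dvd hdvd habs
    have hvv : c.val = c'.val := by omega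
    have := congrArg (fun m : ℕ => ((m : ℕ) : ZMod n)) hvv
    simpa [hval] using this
  -- the key arithmetic equivalence
  have harith : ∀ w jj : ℕ, 1 ≤ jj → jj ≤ n →
      ((0 : ℤ) < S (w + jj) - S w ↔ K w ≤ K (w + jj)) := by
    intro w jj h1 h2
    simp only [hKdef]
    push_cast
    constructor
    · intro h
      have h' : (1 : ℤ) ≤ S (w + jj) - S w := by linarith
      have key : (n : ℤ) * 1 ≤ n * (S (w + jj) - S w) :=
        mul_le_mul_of_nonneg_left h' (by positivity)
      have hjn : (jj : ℤ) ≤ n := by exact_mod_cast h2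
      linarith
    · intro h
      have hjj1 : (1 : ℤ) ≤ jj := by exact_mod_cast h1
      have hpos : (0 : ℤ) < n * (S (w + jj) - S w) := by linarith
      by_contra hc
      push_neg at hc
      have : (n : ℤ) * (S (w + jj) - S w) ≤ 0 :=
        mul_nonpos_of_nonneg_of_nonpos (by positivity) hc
      linarith
  -- partial sums in terms of S
  have hsum_shift : ∀ (r : ZMod n) (j : ℕ),
      ∑ t ∈ Finset.Icc 1 j, a (r + ((t : ℕ) : ZMod n)) =
        S (r.val + 1 + j) - S (r.val + 1) := by
    intro r j
    induction j with
    | zero => simp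
    | succ j ih =>
      rw [Finset.sum_Icc_succ_top (by omega : 1 ≤ j + 1), ih]
      have hc : ((r.val + 1 + j : ℕ) : ZMod n) = r + ((j + 1 : ℕ) : ZMod n) := by
        push_cast
        rw [hval]
        ring
      rw [show r.val + 1 + (j + 1) = r.val + 1 + j + 1 by omega,
        hstep (r.val + 1 + j), hc]
      ring
  have hcond : ∀ (r : ZMod n) (j : ℕ), 1 ≤ j → j ≤ n →
      ((0 : ℤ) < ∑ t ∈ Finset.Icc 1 j, a (r + ((t : ℕ) : ZMod n)) ↔
        Key r ≤ Key (r + ((j : ℕ) : ZMod n))) := by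
    intro r j h1 h2
    rw [hsum_shift r j]
    have hKrj : Key (r + ((j : ℕ) : ZMod n)) = K (r.val + 1 + j) := by
      simp only [hKeydef]
      apply hKcong
      push_cast
      rw [hval, hval]
      ring
    rw [hKrj]
    have hKr : Key r = K (r.val + 1) := rfl
    rw [hKr]
    exact harith (r.val + 1) j h1 h2
  -- cast injectivity on [1, n]
  have hjinj : ∀ j j' : ℕ, 1 ≤ j → j ≤ n → 1 ≤ j' → j' ≤ n →
      ((j : ZMod n) = (j' : ZMod n)) → j = j' := by
    intro j j' hj1 hjn hj'1 hj'n h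
    rw [ZMod.natCast_eq_natCast_iff'] at h
    rcases Nat.lt_or_ge j n with hlt | hge
    · rw [Nat.mod_eq_of_lt hlt] at h
      rcases Nat.lt_or_ge j' n with hlt' | hge'
      · rw [Nat.mod_eq_of_lt hlt'] at h; exact h
      · have hj'eq : j' = n := le_antisymm hj'n hge'
        rw [hj'eq, Nat.mod_self] at h
        omega
    · have hjeq : j = n := le_antisymm hjn hge
      rw [hjeq, Nat.mod_self] at h
      rcases Nat.lt_or_ge j' n with hlt' | hge'
      · rw [Nat.mod_eq_of_lt hlt'] at h
        omega
      · have hj'eq : j' = n := le_antisymm hj'n hge'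
        omega
  -- the count for each r equals the rank of Key r
  have hcard : ∀ r : ZMod n,
      ((Finset.Icc 1 n).filter (fun j =>
        0 < ∑ t ∈ Finset.Icc 1 j, a (r + ((t : ℕ) : ZMod n)))).card =
      (Finset.univ.filter (fun c => Key r ≤ Key c)).card := by
    intro r
    apply Finset.card_bij (fun j _ => r + ((j : ℕ) : ZMod n))
    · intro j hj
      rw [Finset.mem_filter, Finset.mem_Icc] at hj
      rw [Finset.mem_filter]
      exact ⟨Finset.mem_univ _, (hcond r j hj.1.1 hj.1.2).mp hj.2⟩
    · intro j hj j' hj' h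
      rw [Finset.mem_filter, Finset.mem_Icc] at hj hj'
      have := add_left_cancel h
      exact hjinj j j' hj.1.1 hj.1.2 hj'.1.1 hj'.1.2 this
    · intro c hc
      rw [Finset.mem_filter] at hc
      set j : ℕ := if c = r then n else (c - r).val with hjdef
      have hj1 : 1 ≤ j := by
        rw [hjdef]
        split
        · omega
        · next hne =>
          have : c - r ≠ 0 := sub_ne_zero.mpr hne
          have := (ZMod.val_eq_zero (c - r)).not.mpr this
          omega
      have hjn : j ≤ n := by
        rw [hjdef]
        split
        · omega
        · exact le_of_lt (ZMod.val_lt _)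
      have hcast : ((j : ℕ) : ZMod n) = c - r := by
        rw [hjdef]
        split
        · next heq => simp [heq]
        · exact hval _
      have hrj : r + ((j : ℕ) : ZMod n) = c := by rw [hcast]; ring
      refine ⟨j, ?_, hrj⟩
      rw [Finset.mem_filter, Finset.mem_Icc]
      refine ⟨⟨hj1, hjn⟩, ?_⟩
      rw [hcond r j hj1 hjn, hrj]
      exact hc.2
  -- rank function
  set g : ZMod n → ℕ := fun r => (Finset.univ.filter (fun c => Key r ≤ Key c)).card
    with hgdef
  have hgapp : ∀ r : ZMod n,
      g r = (Finset.univ.filter (fun c => Key r ≤ Key c)).card := fun _ => rfl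
  have hmono : ∀ r r' : ZMod n, Key r < Key r' → g r' < g r := by
    intro r r' h
    rw [hgapp, hgapp]
    apply Finset.card_lt_card
    rw [Finset.ssubset_iff_of_subset]
    · refine ⟨r, Finset.mem_filter.2 ⟨Finset.mem_univ r, le_refl _⟩, ?_⟩
      intro hmem
      rw [Finset.mem_filter] at hmem
      exact absurd hmem.2 (not_le.mpr h)
    · intro c hc
      rw [Finset.mem_filter] at hc ⊢
      exact ⟨hc.1, le_trans h.le hc.2⟩
  have hginj : Function.Injective g := by
    intro r r' h
    by_contra hne
    rcases lt_trichotomy (Key r) (Key r') with hlt | heq | hgt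
    · exact absurd h.symm (hmono _ _ hlt).ne
    · exact hne (hKeyinj heq)
    · exact absurd h (hmono _ _ hgt).ne
  have hcardz : Fintype.card (ZMod n) = n := ZMod.card n
  have hg1 : ∀ r, 1 ≤ g r := by
    intro r
    rw [hgapp]
    exact Finset.card_pos.2
      ⟨r, Finset.mem_filter.2 ⟨Finset.mem_univ r, le_refl _⟩⟩
  have hgn : ∀ r, g r ≤ n := by
    intro r
    rw [hgapp]
    refine (Finset.card_filter_le _ _).trans ?_
    simp [hcardz]
  have himg : Finset.image g Finset.univ = Finset.Icc 1 n := by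
    apply Finset.eq_of_subset_of_card_le
    · intro x hx
      rw [Finset.mem_image] at hx
      obtain ⟨r, _, rfl⟩ := hx
      exact Finset.mem_Icc.2 ⟨hg1 r, hgn r⟩
    · rw [Finset.card_image_of_injective _ hginj]
      simp only [Nat.card_Icc, Finset.card_univ, hcardz]
      omega
  have hl : l ∈ Finset.image g Finset.univ := by
    rw [himg]
    exact Finset.mem_Icc.2 ⟨hl1, hln⟩
  obtain ⟨r, _, hr⟩ := Finset.mem_image.1 hl
  have hr' : (Finset.univ.filter (fun c => Key r ≤ Key c)).card = l := by
    rw [← hgapp]; exact hr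
  refine ⟨r, (hcard r).trans hr', fun r' h' => ?_⟩
  apply hginj
  have e' : g r' = l := by rw [hgapp, ← hcard r']; exact h'
  rw [e', hr]
end

section
/- (Raney) Let n ≥ 1 and let a : ℤ/nℤ → ℤ be a cyclic arrangement of n integers whose sum is +1. Then there is exactly one r ∈ ℤ/nℤ such that all n partial sums of the linearization b_j = a_{r+j} (j = 1, …, n) are positive. -/
/-- (Raney) Let `n ≥ 1` and let `a : ZMod n → ℤ` be a cyclic arrangement of `n`
integers whose sum is `+1`. Then there is exactly one position `r` such that all `n`
partial sums of the linearization `b_j = a (r+j)` (`j = 1, …, n`) are positive. -/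
theorem raney (n : ℕ) (hn : 1 ≤ n) (a : ZMod n → ℤ)
    (hsum : ∑ j ∈ Finset.range n, a ((j : ℕ) : ZMod n) = 1) :
    ∃! r : ZMod n, ∀ j ∈ Finset.Icc 1 n,
      0 < ∑ t ∈ Finset.Icc 1 j, a (r + ((t : ℕ) : ZMod n)) := by
  haveI : NeZero n := ⟨by omega⟩
  set A : ℕ → ℤ := fun k => ∑ i ∈ Finset.range k, a ((i : ℕ) : ZMod n) with hA
  -- sum over range n equals sum over the whole group
  have hsum_univ : ∀ f : ZMod n → ℤ,
      ∑ j ∈ Finset.range n, f ((j : ℕ) : ZMod n) = ∑ x : ZMod n, f x := by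
    intro f
    refine Finset.sum_nbij' (i := fun j => ((j : ℕ) : ZMod n)) (j := fun x => x.val)
      (fun a _ => Finset.mem_univ _) (fun x _ => Finset.mem_range.2 (ZMod.val_lt x))
      (fun j hj => ZMod.val_cast_of_lt (Finset.mem_range.1 hj))
      (fun x _ => ZMod.natCast_zmod_val x) (fun _ _ => rfl)
  -- periodicity
  have hper : ∀ k, A (k + n) = A k + 1 := by
    intro k
    have h1 : A (k + n) = A k + ∑ i ∈ Finset.range n, a (((k + i : ℕ)) : ZMod n) := by
      simp [hA, Finset.sum_range_add]
    have h2 : ∑ i ∈ Finset.range n, a (((k + i : ℕ)) : ZMod n) = 1 := by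
      have e1 := hsum_univ (fun x => a ((k : ZMod n) + x))
      calc ∑ i ∈ Finset.range n, a (((k + i : ℕ)) : ZMod n)
          = ∑ i ∈ Finset.range n, a ((k : ZMod n) + ((i : ℕ) : ZMod n)) := by
            refine Finset.sum_congr rfl fun i _ => ?_
            congr 1; push_cast; ring
        _ = ∑ x : ZMod n, a ((k : ZMod n) + x) := e1
        _ = ∑ x : ZMod n, a x := Fintype.sum_equiv (Equiv.addLeft (k : ZMod n)) _ a (fun x => rfl)
        _ = 1 := by rw [← hsum_univ a]; exact hsum
    omega
  -- key identity
  have hkey : ∀ (r : ZMod n) (j : ℕ),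
      ∑ t ∈ Finset.Icc 1 j, a (r + ((t : ℕ) : ZMod n)) = A (r.val + 1 + j) - A (r.val + 1) := by
    intro r j
    induction j with
    | zero => simp
    | succ j ih =>
      rw [Finset.sum_Icc_succ_top (by omega), ih]
      have heq : A (r.val + 1 + (j + 1)) = A (r.val + 1 + j) + a (r + (((j + 1 : ℕ)) : ZMod n)) := by
        show (∑ i ∈ Finset.range (r.val + 1 + (j + 1)), a ((i : ℕ) : ZMod n)) = _
        rw [show r.val + 1 + (j + 1) = (r.val + 1 + j) + 1 by ring, Finset.sum_range_succ]
        congr 1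
        conv_rhs => rw [← ZMod.natCast_zmod_val r]
        push_cast; ring
      rw [heq]; ring
  -- abstract positivity property
  have hP : ∀ r : ZMod n,
      (∀ j ∈ Finset.Icc 1 n, 0 < ∑ t ∈ Finset.Icc 1 j, a (r + ((t : ℕ) : ZMod n))) ↔
      (∀ j, 1 ≤ j → j ≤ n → A (r.val + 1) < A (r.val + 1 + j)) := by
    intro r
    constructor
    · intro h j h1 h2
      have := h j (Finset.mem_Icc.2 ⟨h1, h2⟩)
      rw [hkey] at this; omega
    · intro h j hj
      obtain ⟨h1, h2⟩ := Finset.mem_Icc.1 hj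
      rw [hkey]
      have := h j h1 h2; omega
  -- uniqueness of a "good" start in [1, n]
  have huniq : ∀ x y : ℕ, 1 ≤ x → x < y → y ≤ n →
      (∀ j, 1 ≤ j → j ≤ n → A x < A (x + j)) →
      (∀ j, 1 ≤ j → j ≤ n → A y < A (y + j)) → False := by
    intro x y hx hxy hy Px Py
    have h1 : A x < A y := by
      have := Px (y - x) (by omega) (by omega)
      rwa [show x + (y - x) = y by omega] at this
    have h2 : A y < A (x + n) := by
      have := Py (x + n - y) (by omega) (by omega)
      rwa [show y + (x + n - y) = x + n by omega] at this
    rw [hper x] at h2; omega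
  -- existence: pick the largest minimizer of A on [1, n]
  have hx : ∃ x ∈ Finset.Icc 1 n, (∀ k ∈ Finset.Icc 1 n, A x ≤ A k) ∧
      (∀ k ∈ Finset.Icc 1 n, A k = A x → k ≤ x) := by
    classical
    have hne : (Finset.Icc 1 n).Nonempty := ⟨1, Finset.mem_Icc.2 ⟨le_refl 1, hn⟩⟩
    obtain ⟨M, hM⟩ := ((Finset.Icc 1 n).image A).min_of_nonempty (hne.image A)
    have hMmem := Finset.mem_image.1 (Finset.mem_of_min hM)
    obtain ⟨x0, hx0, hx0M⟩ := hMmem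
    have hminle : ∀ k ∈ Finset.Icc 1 n, M ≤ A k := fun k hk =>
      Finset.min_le_of_eq (Finset.mem_image_of_mem A hk) hM
    set T := (Finset.Icc 1 n).filter (fun k => A k = M) with hT
    have hTne : T.Nonempty := ⟨x0, Finset.mem_filter.2 ⟨hx0, hx0M⟩⟩
    refine ⟨T.max' hTne, (Finset.mem_filter.1 (T.max'_mem hTne)).1, ?_, ?_⟩
    · intro k hk
      have : A (T.max' hTne) = M := (Finset.mem_filter.1 (T.max'_mem hTne)).2
      rw [this]; exact hminle k hk
    · intro k hk hkA
      apply Finset.le_max'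
      refine Finset.mem_filter.2 ⟨hk, ?_⟩
      rw [hkA, (Finset.mem_filter.1 (T.max'_mem hTne)).2]
  obtain ⟨x, hxmem, hmin, hlast⟩ := hx
  obtain ⟨hx1, hxn⟩ := Finset.mem_Icc.1 hxmem
  have hPx : ∀ j, 1 ≤ j → j ≤ n → A x < A (x + j) := by
    intro j h1 h2
    by_cases hc : x + j ≤ n
    · have hmem : x + j ∈ Finset.Icc 1 n := Finset.mem_Icc.2 ⟨by omega, hc⟩
      have hle := hmin _ hmem
      rcases lt_or_eq_of_le hle with h | h
      · exact h
      · exact absurd (hlast _ hmem h.symm) (by omega)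
    · have hm : x + j - n ∈ Finset.Icc 1 n := Finset.mem_Icc.2 ⟨by omega, by omega⟩
      have := hmin _ hm
      have heq : A (x + j) = A (x + j - n) + 1 := by
        have := hper (x + j - n)
        rwa [show x + j - n + n = x + j by omega] at this
      omega
  set r0 : ZMod n := ((x - 1 : ℕ) : ZMod n) with hr0
  have hr0val : r0.val = x - 1 := ZMod.val_cast_of_lt (by omega)
  refine ⟨r0, ?_, ?_⟩
  · refine (hP r0).2 ?_
    rw [hr0val, show x - 1 + 1 = x by omega]
    exact hPx
  · intro r hr
    replace hr := (hP r).1 hr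
    have hrval : r.val < n := ZMod.val_lt r
    by_contra hne
    have hvalne : r.val + 1 ≠ x := by
      intro h
      apply hne
      have : r.val = x - 1 := by omega
      rw [← ZMod.natCast_zmod_val r, this, hr0]
    rcases lt_or_gt_of_ne hvalne with h | h
    · exact huniq (r.val + 1) x (by omega) h hxn hr hPx
    · exact huniq x (r.val + 1) hx1 h (by omega) hPx hr
end

section
/- For integers q ≥ 1 and k ≥ 0, the number of q-Raney sequences with k terms equal to −q, i.e. sequences (b_1, …, b_{(q+1)k+1}) of length (q+1)k+1 with every term in {1, −q}, exactly k terms equal to −q, and every partial sum b_1 + ⋯ + b_j (1 ≤ j ≤ (q+1)k+1) positive, equals the generalized Catalan number C_k^q = (1/(qk+1)) · binom((q+1)k, k). -/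
/-!
The cycle lemma: an integer sequence of length `n` with sum `1` has exactly one cyclic
rotation all of whose nonempty prefix sums are positive. Indeed, on the periodic extension the
partial sums grow by `1` per period, so a rotation is positive exactly when it starts right after
the last minimum of the partial sums over one period.

The rotations of a `q`-Raney sequence are therefore pairwise distinct, and the `C(n, k)`
sequences of length `n = (q+1)k+1` with `k` terms `-q` (all of sum `1`) split into rotation
classes of size `n`, each containing exactly one Raney sequence. Hence there are `C(n, k) / n`
of them, and `C(n, k) / n = C(n - 1, k) / (qk + 1)`.
-/

open Finset Function

section Periodic

variable {c : ℕ → ℤ} {n : ℕ}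

def IsPositiveStart (c : ℕ → ℤ) (n i : ℕ) : Prop :=
  ∀ m, 1 ≤ m → m ≤ n → 0 < ∑ t ∈ range m, c (i + t)

lemma sum_range_add_sub (c : ℕ → ℤ) (i m : ℕ) :
    ∑ t ∈ range m, c (i + t) = ∑ t ∈ range (i + m), c t - ∑ t ∈ range i, c t := by
  rw [sum_range_add]; ring

lemma sum_range_add_period (hc : Periodic c n) (hsum : ∑ t ∈ range n, c t = 1) (j : ℕ) :
    ∑ t ∈ range (j + n), c t = ∑ t ∈ range j, c t + 1 := by
  induction j with
  | zero => simpa using hsum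
  | succ j ih => rw [Nat.add_right_comm, sum_range_succ, ih, hc, sum_range_succ]; ring

/-- Minimising `n * S j - j` over `[0, n)` picks the last minimum of the partial sums `S`. -/
lemma exists_isPositiveStart (hn : 0 < n) (hc : Periodic c n)
    (hsum : ∑ t ∈ range n, c t = 1) : ∃ i < n, IsPositiveStart c n i := by
  let S (j : ℕ) : ℤ := ∑ t ∈ range j, c t
  obtain ⟨i, hi, hmin⟩ := exists_min_image (range n) (fun j => n * S j - j) ⟨0, by simpa⟩
  rw [mem_range] at hi
  refine ⟨i, hi, fun m hm1 hmn => ?_⟩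
  rw [sum_range_add_sub]
  change 0 < S (i + m) - S i
  rcases lt_or_ge (i + m) n with hlt | hge
  · have := hmin (i + m) (mem_range.2 hlt)
    push_cast at this
    nlinarith
  · have hr := hmin (i + m - n) (mem_range.2 (by omega))
    have hper : S (i + m) = S (i + m - n) + 1 := by
      rw [← sum_range_add_period hc hsum, Nat.sub_add_cancel hge]
    push_cast [hge] at hr
    nlinarith

lemma add_le_of_isPositiveStart (hc : Periodic c n) (hsum : ∑ t ∈ range n, c t = 1)
    {i j : ℕ} (hi : IsPositiveStart c n i) (hj : IsPositiveStart c n j) (hij : i < j) :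
    i + n ≤ j := by
  by_contra! hlt
  have h₁ := hi (j - i) (by omega) (by omega)
  have h₂ := hj (i + n - j) (by omega) (by omega)
  rw [sum_range_add_sub, Nat.add_sub_cancel' hij.le] at h₁
  rw [sum_range_add_sub, Nat.add_sub_cancel' (by omega), sum_range_add_period hc hsum] at h₂
  omega

end Periodic

namespace List

def PrefixSumsPos (l : List ℤ) : Prop :=
  ∀ m, 1 ≤ m → m ≤ l.length → 0 < (l.take m).sum

def cyclicGet (l : List ℤ) (j : ℕ) : ℤ := l.getD (j % l.length) 0

lemma periodic_cyclicGet (l : List ℤ) : Periodic l.cyclicGet l.length := by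
  intro j; simp [cyclicGet]

lemma sum_take_rotate (l : List ℤ) (i : ℕ) {m : ℕ} (hm : m ≤ l.length) :
    ((l.rotate i).take m).sum = ∑ t ∈ Finset.range m, l.cyclicGet (i + t) := by
  induction m with
  | zero => simp
  | succ m ih =>
    have hlt : m < l.length := hm
    rw [sum_take_succ _ _ (by simpa), ih hlt.le, Finset.sum_range_succ, getElem_rotate, cyclicGet,
      getD_eq_getElem _ _ (Nat.mod_lt _ (by omega)), Nat.add_comm m]

lemma sum_eq_sum_range_cyclicGet (l : List ℤ) :
    l.sum = ∑ t ∈ Finset.range l.length, l.cyclicGet t := by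
  simpa using l.sum_take_rotate 0 le_rfl

lemma prefixSumsPos_rotate_iff (l : List ℤ) (i : ℕ) :
    (l.rotate i).PrefixSumsPos ↔ IsPositiveStart l.cyclicGet l.length i := by
  simp only [PrefixSumsPos, IsPositiveStart, length_rotate]
  exact forall₃_congr fun m _ hm => by rw [sum_take_rotate l i hm]

lemma exists_prefixSumsPos_rotate {l : List ℤ} (hsum : l.sum = 1) :
    ∃ i < l.length, (l.rotate i).PrefixSumsPos := by
  have hn : 0 < l.length := length_pos_of_ne_nil (by rintro rfl; simp at hsum)
  simp only [prefixSumsPos_rotate_iff]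
  exact exists_isPositiveStart hn l.periodic_cyclicGet (l.sum_eq_sum_range_cyclicGet ▸ hsum)

lemma add_length_le_of_prefixSumsPos_rotate {l : List ℤ} (hsum : l.sum = 1) {i j : ℕ}
    (hi : (l.rotate i).PrefixSumsPos) (hj : (l.rotate j).PrefixSumsPos) (hij : i < j) :
    i + l.length ≤ j := by
  rw [prefixSumsPos_rotate_iff] at hi hj
  exact add_le_of_isPositiveStart l.periodic_cyclicGet (l.sum_eq_sum_range_cyclicGet ▸ hsum)
    hi hj hij

lemma le_of_rotate_eq_rotate {l l' : List ℤ} (hsum : l'.sum = 1) (hl : l.PrefixSumsPos)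
    (hl' : l'.PrefixSumsPos) (hlen : l.length = l'.length) {i i' : ℕ} (hi : i < l.length)
    (h : l.rotate i = l'.rotate i') : i ≤ i' := by
  have hl_eq : l = l'.rotate (i' + (l.length - i)) := by
    rw [← rotate_rotate, ← h, rotate_rotate, Nat.add_sub_cancel' hi.le, rotate_length]
  have := add_length_le_of_prefixSumsPos_rotate hsum (i := 0) (by simpa using hl')
    (hl_eq ▸ hl) (by omega)
  omega

lemma sum_eq_of_forall_mem_eq_or_eq {a b : ℤ} (hab : a ≠ b) {l : List ℤ}
    (h : ∀ x ∈ l, x = a ∨ x = b) :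
    l.sum = ((l.length : ℤ) - l.count b) * a + l.count b * b := by
  induction l with
  | nil => simp
  | cons x t ih =>
    rw [forall_mem_cons] at h
    rcases h.1 with rfl | rfl
    · simp [ih h.2, hab]; ring
    · simp [ih h.2]; ring

lemma count_ofFn_ite {α : Type*} [DecidableEq α] {a b : α} (hab : a ≠ b) {n : ℕ}
    (t : Finset (Fin n)) : (ofFn fun j => if j ∈ t then b else a).count b = #t := by
  rw [← Multiset.coe_count, ← Fin.univ_val_map, Multiset.count_map]
  change #(univ.filter _) = _
  congr 1
  ext j
  by_cases hj : j ∈ t <;> simp [hj, hab.symm]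

end List

lemma card_prefixSumsPos_mul_eq_card {P : List ℤ → Prop} {n : ℕ}
    (hrot : ∀ l i, P l → P (l.rotate i)) (hlen : ∀ l, P l → l.length = n)
    (hsum : ∀ l, P l → l.sum = 1) :
    Nat.card {l // P l ∧ l.PrefixSumsPos} * n = Nat.card {l // P l} := by
  let rot (p : {l // P l ∧ l.PrefixSumsPos} × Fin n) : {l // P l} :=
    ⟨p.1.1.rotate p.2, hrot _ _ p.1.2.1⟩
  have hbij : Bijective rot := by
    constructor
    · rintro ⟨⟨l, hPl, hl⟩, i⟩ ⟨⟨l', hPl', hl'⟩, i'⟩ h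
      have h' : l.rotate i = l'.rotate i' := congrArg Subtype.val h
      have hlen' : l.length = l'.length := (hlen l hPl).trans (hlen l' hPl').symm
      have hi : (i : ℕ) = i' := le_antisymm
        (List.le_of_rotate_eq_rotate (hsum l' hPl') hl hl' hlen' (hlen l hPl ▸ i.2) h')
        (List.le_of_rotate_eq_rotate (hsum l hPl) hl' hl hlen'.symm (hlen l' hPl' ▸ i'.2) h'.symm)
      obtain rfl : i = i' := Fin.ext hi
      obtain rfl : l = l' := List.rotate_injective i h'
      rfl
    · rintro ⟨a, ha⟩
      obtain ⟨i, hi, hpos⟩ := List.exists_prefixSumsPos_rotate (hsum a ha)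
      obtain rfl := hlen a ha
      refine ⟨(⟨a.rotate i, hrot _ _ ha, hpos⟩,
        ⟨(a.length - i) % a.length, Nat.mod_lt _ (by omega)⟩), Subtype.ext ?_⟩
      change (a.rotate i).rotate ((a.length - i) % a.length) = a
      rw [List.rotate_rotate, ← List.rotate_mod, Nat.add_mod_mod, Nat.add_sub_cancel' hi.le,
        Nat.mod_self, List.rotate_zero]
  rw [← Nat.card_eq_of_bijective rot hbij, Nat.card_prod, Nat.card_eq_fintype_card (α := Fin n),
    Fintype.card_fin]

lemma card_list_count_eq_choose {α : Type*} [DecidableEq α] {a b : α} (hab : a ≠ b)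
    (n k : ℕ) :
    Nat.card {l : List α // l.length = n ∧ (∀ x ∈ l, x = a ∨ x = b) ∧ l.count b = k} =
      n.choose k := by
  let toList (t : {t : Finset (Fin n) // #t = k}) :
      {l : List α // l.length = n ∧ (∀ x ∈ l, x = a ∨ x = b) ∧ l.count b = k} :=
    ⟨List.ofFn fun j => if j ∈ t.1 then b else a, List.length_ofFn,
      fun x hx => by obtain ⟨j, rfl⟩ := List.mem_ofFn.1 hx; split_ifs <;> simp,
      (List.count_ofFn_ite hab t.1).trans t.2⟩
  have hbij : Bijective toList := by
    constructor
    · rintro ⟨t, _⟩ ⟨t', _⟩ h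
      have h' := List.ofFn_injective (congrArg Subtype.val h)
      ext j
      have := congrFun h' j
      by_cases hj : j ∈ t <;> by_cases hj' : j ∈ t' <;> simp_all [hab.symm]
    · rintro ⟨l, hlen, hmem, hcount⟩
      subst hlen
      let t : Finset (Fin l.length) := univ.filter fun j => l[j] = b
      have hl : (List.ofFn fun j => if j ∈ t then b else a) = l := by
        refine List.ext_getElem (by simp) fun j _ hj => ?_
        rcases hmem _ (l.getElem_mem hj) with h | h <;> simp [t, h, hab]
      exact ⟨⟨t, (List.count_ofFn_ite hab t).symm.trans (hl.symm ▸ hcount)⟩, Subtype.ext hl⟩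
  rw [← Nat.card_eq_of_bijective toList hbij, Nat.card_eq_fintype_card,
    Fintype.card_finset_len, Fintype.card_fin]

lemma card_raney_mul (q k : ℕ) :
    Nat.card {b : List ℤ // b.length = (q + 1) * k + 1 ∧
        (∀ x ∈ b, x = 1 ∨ x = -(q : ℤ)) ∧
        b.count (-(q : ℤ)) = k ∧
        (∀ m : ℕ, 1 ≤ m → m ≤ b.length → 0 < (b.take m).sum)} * ((q + 1) * k + 1) =
      ((q + 1) * k + 1).choose k := by
  have hne : (1 : ℤ) ≠ -(q : ℤ) := by omega
  let P (l : List ℤ) : Prop := l.length = (q + 1) * k + 1 ∧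
    (∀ x ∈ l, x = 1 ∨ x = -(q : ℤ)) ∧ l.count (-(q : ℤ)) = k
  have hrot (l : List ℤ) (i : ℕ) : P l → P (l.rotate i) := fun ⟨hlen, hmem, hcount⟩ =>
    ⟨by rw [List.length_rotate, hlen], fun x hx => hmem x (List.mem_rotate.1 hx),
      (l.rotate_perm i).count_eq _ ▸ hcount⟩
  have hsum (l : List ℤ) : P l → l.sum = 1 := fun ⟨hlen, hmem, hcount⟩ => by
    rw [List.sum_eq_of_forall_mem_eq_or_eq hne hmem, hlen, hcount]; push_cast; ring
  calc _ = Nat.card {l // P l ∧ l.PrefixSumsPos} * ((q + 1) * k + 1) := by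
        congr 1
        exact Nat.card_congr <| Equiv.subtypeEquivRight fun _ => by
          simp only [P, List.PrefixSumsPos, and_assoc]
    _ = Nat.card {l // P l} := card_prefixSumsPos_mul_eq_card hrot (fun _ h => h.1) hsum
    _ = _ := card_list_count_eq_choose hne _ _

theorem count_q_raney_general (q k : ℕ) :
    (Nat.card {b : List ℤ // b.length = (q + 1) * k + 1 ∧
        (∀ x ∈ b, x = 1 ∨ x = -(q : ℤ)) ∧
        b.count (-(q : ℤ)) = k ∧
        (∀ m : ℕ, 1 ≤ m → m ≤ b.length → 0 < (b.take m).sum)} : ℚ) =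
      1 / (q * k + 1) * Nat.choose ((q + 1) * k) k := by
  have hchoose := Nat.choose_mul_succ_eq ((q + 1) * k) k
  rw [show (q + 1) * k + 1 - k = q * k + 1 by ring_nf; omega] at hchoose
  rw [one_div_mul_eq_div, eq_div_iff (by positivity)]
  norm_cast
  apply Nat.eq_of_mul_eq_mul_right (Nat.succ_pos ((q + 1) * k))
  rw [mul_right_comm, card_raney_mul, hchoose]

/-- For `q ≥ 1` and `k ≥ 0`, the number of `q`-Raney sequences with `k` terms equal to
`−q` — sequences of length `(q+1)k+1` with every term in `{1, −q}`, exactly `k` terms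
equal to `−q`, and every partial sum positive — equals the generalized Catalan number
`C_k^q = (1/(qk+1)) · C((q+1)k, k)`. -/
theorem count_q_raney (q k : ℕ) (hq : 1 ≤ q) :
    (Nat.card {b : List ℤ // b.length = (q + 1) * k + 1 ∧
        (∀ x ∈ b, x = 1 ∨ x = -(q : ℤ)) ∧
        b.count (-(q : ℤ)) = k ∧
        (∀ m : ℕ, 1 ≤ m → m ≤ b.length → 0 < (b.take m).sum)} : ℚ) =
      1 / (q * k + 1) * Nat.choose ((q + 1) * k) k :=
  count_q_raney_general q k
end

section
/- (Snevily) Let k, l ≥ 1 be relatively prime integers and let a be a (k,l)-arrangement of length n = k + l. For a zero position r (a position with a_r = 0), let P(r) be the position-sum of the 0-linearization ending at r, namely the sum of the indices j ∈ {1, …, n} such that a_{r+j} = 1. Then the l values P(r), over the l zero positions r, are pairwise incongruent modulo l. -/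
/-!
For a zero position `t`, `positionSum a t = ∑ (i - t).val` over the ones `i` of `a`. Moving the
base point from a zero `r` to a zero `s` raises each of these distances by `d = (s - r).val`,
except that the ones in the arc `[r, s)` wrap around and lose `n = k + l`. With `m` ones and `z`
zeros in that arc (so `d = m + z`) this gives `P(r) + l m = P(s) + k z`. Hence
`P(r) ≡ P(s) [MOD l]` forces `l ∣ k z`, so `l ∣ z`; but `0 < z < l`, since the arc contains
the zero `r` and misses the zero `s`.
-/

/-- The position-sum of the 0-linearization of `a` ending at `r`: the sum of the
indices `j ∈ {1, …, n}` such that `a (r+j) = 1` (`true`). -/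
def positionSum {n : ℕ} (a : ZMod n → Bool) (r : ZMod n) : ℕ :=
  ∑ j ∈ Finset.Icc 1 n, if a (r + ((j : ℕ) : ZMod n)) = true then j else 0

open Finset

namespace ZMod

variable {n : ℕ} [NeZero n]

theorem sum_univ_comp_val {M : Type*} [AddCommMonoid M] (g : ℕ → M) :
    ∑ x : ZMod n, g x.val = ∑ j ∈ range n, g j := by
  refine sum_nbij' val (fun j => (j : ZMod n)) (fun x _ => mem_range.2 x.val_lt)
    (fun _ _ => mem_univ _) (fun x _ => natCast_zmod_val x) (fun j hj => ?_) (fun _ _ => rfl)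
  exact val_cast_of_lt (mem_range.1 hj)

theorem val_add_add_ite_val_lt (x y : ZMod n) :
    (x + y).val + (if (x + y).val < y.val then n else 0) = x.val + y.val := by
  rcases lt_or_ge (x.val + y.val) n with h | h
  · rw [val_add_of_lt h, if_neg (by omega), add_zero]
  · have := val_add_val_of_le h
    have := x.val_lt
    rw [if_pos (by omega)]
    omega

/-- The cyclic interval `[r, s)`. -/
def arc (r s : ZMod n) : Finset (ZMod n) := {i | (i - r).val < (s - r).val}

theorem mem_arc {r s i : ZMod n} : i ∈ arc r s ↔ (i - r).val < (s - r).val := by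
  simp [arc]

theorem card_arc (r s : ZMod n) : #(arc r s) = (s - r).val := by
  have hd := (s - r).val_lt
  refine (card_nbij' (fun i => (i - r).val) (fun j => r + (j : ZMod n)) ?_ ?_ ?_ ?_).trans
    (card_range _)
  · intro i hi
    simpa [mem_arc] using hi
  · intro j hj
    simp only [coe_range, Set.mem_Iio] at hj
    simp [mem_arc, val_cast_of_lt (hj.trans hd), hj]
  · intro i _
    simp
  · intro j hj
    simp only [coe_range, Set.mem_Iio] at hj
    simp [val_cast_of_lt (hj.trans hd)]

theorem left_mem_arc {r s : ZMod n} (h : r ≠ s) : r ∈ arc r s := by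
  simpa [mem_arc, val_pos, sub_eq_zero] using h.symm

theorem right_notMem_arc (r s : ZMod n) : s ∉ arc r s := by
  simp [mem_arc]

theorem sum_val_sub_add_mul_card_inter_arc (O : Finset (ZMod n)) (r s : ZMod n) :
    ∑ i ∈ O, (i - r).val + n * #(O ∩ arc r s) =
      ∑ i ∈ O, (i - s).val + #O * (s - r).val := by
  have hterm (i : ZMod n) :
      (i - r).val + (if i ∈ arc r s then n else 0) = (i - s).val + (s - r).val := by
    have h := val_add_add_ite_val_lt (i - s) (s - r)
    rw [sub_add_sub_cancel] at h
    simpa only [mem_arc] using h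
  have hcard : n * #(O ∩ arc r s) = ∑ i ∈ O, if i ∈ arc r s then n else 0 := by
    rw [sum_ite_mem, sum_const, smul_eq_mul, mul_comm]
  rw [hcard, ← sum_add_distrib, sum_congr rfl fun i _ => hterm i, sum_add_distrib, sum_const,
    smul_eq_mul]

end ZMod

open ZMod

section Arrangement

variable {n : ℕ} [NeZero n] (a : ZMod n → Bool)

def ones : Finset (ZMod n) := {i | a i = true}

def zeros : Finset (ZMod n) := {i | a i = false}

variable {a}

theorem card_ones_add_card_zeros : #(ones a) + #(zeros a) = n := by
  simpa [ones, zeros] using card_filter_add_card_filter_not (s := univ) (fun i => a i = true)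

theorem positionSum_eq_sum_val_sub {t : ZMod n} (ht : a t = false) :
    positionSum a t = ∑ i ∈ ones a, (i - t).val := by
  set g : ℕ → ℕ := fun j => if a (t + j) = true then j else 0
  have hg : g n = 0 := by simp [g, ht]
  calc positionSum a t = ∑ j ∈ range (n + 1), g j := by
        rw [range_eq_Ico, sum_eq_sum_Ico_succ_bot n.succ_pos]
        simp [positionSum, g, Ico_add_one_right_eq_Icc]
    _ = ∑ x : ZMod n, g x.val := by rw [sum_range_succ, hg, add_zero, sum_univ_comp_val]
    _ = ∑ i, if a i = true then (i - t).val else 0 :=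
        (Fintype.sum_equiv (Equiv.subRight t) _ _ fun i => by simp [g]).symm
    _ = ∑ i ∈ ones a, (i - t).val := by rw [ones, sum_filter]

theorem positionSum_add_card_mul_card_ones_inter_arc {r s : ZMod n} (hr : a r = false)
    (hs : a s = false) :
    positionSum a r + #(zeros a) * #(ones a ∩ arc r s) =
      positionSum a s + #(ones a) * #(zeros a ∩ arc r s) := by
  have hsum := sum_val_sub_add_mul_card_inter_arc (ones a) r s
  have hsplit : #(ones a ∩ arc r s) + #(zeros a ∩ arc r s) = (s - r).val := by
    have := card_filter_add_card_filter_not (s := arc r s) (fun i => a i = true)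
    rw [card_arc] at this
    convert this using 3 <;> ext <;> simp [ones, zeros, and_comm]
  have hn : n * #(ones a ∩ arc r s) =
      #(ones a) * #(ones a ∩ arc r s) + #(zeros a) * #(ones a ∩ arc r s) := by
    rw [← add_mul, card_ones_add_card_zeros]
  rw [← positionSum_eq_sum_val_sub hr, ← positionSum_eq_sum_val_sub hs, ← hsplit, hn] at hsum
  linarith

theorem card_zeros_inter_arc_pos {r s : ZMod n} (hr : a r = false) (hrs : r ≠ s) :
    0 < #(zeros a ∩ arc r s) :=
  card_pos.2 ⟨r, mem_inter.2 ⟨by simpa [zeros] using hr, left_mem_arc hrs⟩⟩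

theorem card_zeros_inter_arc_lt {r s : ZMod n} (hs : a s = false) :
    #(zeros a ∩ arc r s) < #(zeros a) := by
  refine card_lt_card ⟨inter_subset_left, fun h => right_notMem_arc r s ?_⟩
  exact (mem_inter.1 (h (by simpa [zeros] using hs))).2

end Arrangement

theorem snevily_general (k l : ℕ) (hco : Nat.Coprime k l)
    (a : ZMod (k + l) → Bool)
    (hones : Nat.card {i : ZMod (k + l) | a i = true} = k) :
    ∀ r s : ZMod (k + l), a r = false → a s = false → r ≠ s →
      ¬ (positionSum a r ≡ positionSum a s [MOD l]) := by
  intro r s hr hs hrs hmod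
  -- `Nat.Coprime 0 0` fails, so `ZMod (k + l)` is finite.
  have : NeZero (k + l) := ⟨fun h => by simp_all [Nat.add_eq_zero_iff]⟩
  have hk : #(ones a) = k := by
    rw [ones, ← Fintype.card_subtype, ← Nat.card_eq_fintype_card]
    exact hones
  have hl : #(zeros a) = l := by
    have := card_ones_add_card_zeros (a := a)
    omega
  have hdvd : l ∣ #(zeros a ∩ arc r s) := by
    have key := positionSum_add_card_mul_card_ones_inter_arc hr hs
    rw [hk, hl] at key
    have hmod' : positionSum a s + k * #(zeros a ∩ arc r s) ≡ positionSum a s + 0 [MOD l] :=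
      calc _ = positionSum a r + l * #(ones a ∩ arc r s) := key.symm
        _ ≡ positionSum a r [MOD l] := Nat.add_mul_mod_self_left _ _ _
        _ ≡ _ [MOD l] := hmod
    exact hco.symm.dvd_of_dvd_mul_left (Nat.modEq_zero_iff_dvd.1 (hmod'.add_left_cancel' _))
  exact (Nat.le_of_dvd (card_zeros_inter_arc_pos hr hrs) hdvd).not_gt
    ((card_zeros_inter_arc_lt hs).trans_eq hl)

/-- (Snevily) Let `k, l ≥ 1` be relatively prime and let `a` be a `(k, l)`-arrangement
of length `k + l`. Then the position-sums of the 0-linearizations of `a`, over the `l`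
zero positions, belong to distinct congruence classes modulo `l`. -/
theorem snevily (k l : ℕ) (hk : 1 ≤ k) (hl : 1 ≤ l) (hco : Nat.Coprime k l)
    (a : ZMod (k + l) → Bool)
    (hones : Nat.card {i : ZMod (k + l) | a i = true} = k) :
    ∀ r s : ZMod (k + l), a r = false → a s = false → r ≠ s →
      ¬ (positionSum a r ≡ positionSum a s [MOD l]) :=
  snevily_general k l hco a hones
end

section
/- Let q ≥ 0, k ≥ 0, p ≥ 1, and let a be a (k, qk+p)-arrangement. Then every 0-linearization of a has at least p q-good 0-intervals: for every position r with a_r = 0, there are at least p positions j with a_j = 0 such that the interval (r,j] is q-good. -/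
lemma exists_last_crossing (f : ℕ → ℤ) (n : ℕ) (h0 : f 0 = 0)
    (hstep : ∀ i, f (i+1) = f i + 1 ∨ f (i+1) ≤ f i)
    (v : ℤ) (hv1 : 1 ≤ v) (hvn : v ≤ f n) :
    ∃ j, 1 ≤ j ∧ j ≤ n ∧ f j = v ∧ f (j-1) + 1 = f j := by
  classical
  set T := (Finset.range (n+1)).filter (fun i => f i < v) with hT
  have h0T : 0 ∈ T := by
    simp only [hT, Finset.mem_filter, Finset.mem_range]
    exact ⟨Nat.succ_pos n, by omega⟩
  set m := T.max' ⟨0, h0T⟩ with hm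
  have hmT : m ∈ T := Finset.max'_mem _ _
  simp only [hT, Finset.mem_filter, Finset.mem_range] at hmT
  obtain ⟨hmn, hfm⟩ := hmT
  have hmn' : m ≠ n := by
    intro h; rw [h] at hfm; omega
  have hmlt : m < n := by omega
  have hm1 : m + 1 ∉ T := by
    intro h
    have := Finset.le_max' T (m+1) h
    omega
  have hfm1 : v ≤ f (m+1) := by
    by_contra h
    exact hm1 (by simp only [hT, Finset.mem_filter, Finset.mem_range]; exact ⟨by omega, by omega⟩)
  rcases hstep m with h | h
  · refine ⟨m+1, by omega, by omega, by omega, by simp; omega⟩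
  · omega

theorem main_aux (q k p n : ℕ) (hp : 1 ≤ p) (hn : n = (q + 1) * k + p)
    (a : ZMod n → Bool)
    (hones : Nat.card {i : ZMod n | a i = true} = k)
    (r : ZMod n) :
    p ≤ Nat.card {j : ZMod n | a j = false ∧ QGood q (interval a r j)} := by
  classical
  have hn1 : 0 < n := by omega
  haveI : NeZero n := ⟨by omega⟩
  have hones' : (Finset.univ.filter (fun x : ZMod n => a x = true)).card = k := by
    rw [← hones, Nat.card_eq_fintype_card, Fintype.card_subtype]
    simp [Set.mem_setOf_eq]
  set g : ℕ → Bool := fun i => a (r + ((i + 1 : ℕ) : ZMod n)) with hg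
  set c : ℕ → ℕ := fun i => ((List.range i).map g).count false with hcdef
  set t : ℕ → ℕ := fun i => ((List.range i).map g).count true with htdef
  set f : ℕ → ℤ := fun i => (c i : ℤ) - q * t i with hfdef
  have hc : ∀ i, c (i+1) = c i + (if g i = false then 1 else 0) := by
    intro i
    simp only [hcdef, List.range_succ, List.map_append, List.count_append]
    cases hgi : g i <;> simp [hgi]
  have ht : ∀ i, t (i+1) = t i + (if g i = true then 1 else 0) := by
    intro i
    simp only [htdef, List.range_succ, List.map_append, List.count_append]
    cases hgi : g i <;> simp [hgi]
  have hstep : ∀ i, f (i+1) = f i + 1 ∨ f (i+1) ≤ f i := by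
    intro i
    have h1 := hc i; have h2 := ht i
    cases hgi : g i
    · left; rw [hgi] at h1 h2; simp at h1 h2
      simp only [hfdef, h1, h2]; push_cast; ring
    · right; rw [hgi] at h1 h2; simp at h1 h2
      simp only [hfdef, h1, h2]; push_cast
      have : (0:ℤ) ≤ q := by positivity
      nlinarith
  have hfalse_of_incr : ∀ i, f (i+1) = f i + 1 → g i = false := by
    intro i hfi
    have h1 := hc i; have h2 := ht i
    cases hgi : g i
    · rfl
    · exfalso; rw [hgi] at h1 h2; simp at h1 h2
      have e1 : f (i+1) = f i - q := by
        simp only [hfdef, h1, h2]; push_cast; ring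
      omega
  have hct : ∀ i, c i + t i = i := by
    intro i
    induction i with
    | zero => simp [hcdef, htdef]
    | succ i ih =>
      rw [hc i, ht i]; cases hgi : g i <;> simp <;> omega
  -- count over range m as Finset card
  have hcount : ∀ (m : ℕ) (b : Bool),
      ((List.range m).map g).count b = ((Finset.range m).filter (fun i => g i = b)).card := by
    intro m b
    induction m with
    | zero => simp
    | succ m ih =>
      rw [List.range_succ, Finset.range_add_one, List.map_append, List.count_append,
        Finset.filter_insert]
      by_cases hgm : g m = b
      · rw [if_pos hgm, Finset.card_insert_of_notMem (by simp)]
        simp [hgm, ih]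
      · rw [if_neg hgm]
        simp only [List.count_append, List.map_cons, List.map_nil] at *
        have : List.count b [g m] = 0 := by
          simp [List.count_singleton]
          simpa [eq_comm] using hgm
        omega
  -- bijection with the set of ones
  have hbij : ((Finset.range n).filter (fun i => g i = true)).card
      = (Finset.univ.filter (fun x : ZMod n => a x = true)).card := by
    apply Finset.card_bij (fun i _ => r + ((i + 1 : ℕ) : ZMod n))
    · intro i hi
      simp only [Finset.mem_filter, Finset.mem_range] at hi
      simp only [Finset.mem_filter, Finset.mem_univ, true_and]
      exact hi.2
    · intro i hi i' hi' heq
      simp only [Finset.mem_filter, Finset.mem_range] at hi hi'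
      have h1 : ((i + 1 : ℕ) : ZMod n) = ((i' + 1 : ℕ) : ZMod n) := by
        exact add_left_cancel heq
      have h2 : ((i : ℕ) : ZMod n) = ((i' : ℕ) : ZMod n) := by
        push_cast at h1 ⊢
        exact add_right_cancel h1
      have := congrArg ZMod.val h2
      rwa [ZMod.val_natCast_of_lt hi.1, ZMod.val_natCast_of_lt hi'.1] at this
    · intro x hx
      simp only [Finset.mem_filter, Finset.mem_univ, true_and] at hx
      refine ⟨(x - r - 1).val, ?_, ?_⟩
      · have hval : r + (((x - r - 1).val + 1 : ℕ) : ZMod n) = x := by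
          push_cast
          rw [ZMod.natCast_val, ZMod.cast_id]
          ring
        simp only [Finset.mem_filter, Finset.mem_range]
        exact ⟨ZMod.val_lt _, by rw [hg]; simp only []; rw [hval]; exact hx⟩
      · push_cast
        rw [ZMod.natCast_val, ZMod.cast_id]
        ring
  have htn : t n = k := by
    rw [htdef]
    simp only []
    rw [hcount n true, hbij, hones']
  have hcn : c n = q * k + p := by
    have h1 := hct n
    have h2 : n = (q + 1) * k + p := hn
    have h3 : (q + 1) * k = q * k + k := by ring
    omega
  have hfn : f n = p := by
    simp only [hfdef, htn, hcn]; push_cast; ring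
  have hf0 : f 0 = 0 := by simp [hfdef, hcdef, htdef]
  -- interval of prefix
  have hint : ∀ i, 1 ≤ i → i ≤ n → interval a r (r + (i : ℕ)) = (List.range i).map g := by
    intro i h1 h2
    by_cases hi : i = n
    · rw [hi]
      have h0 : ((n : ℕ) : ZMod n) = 0 := ZMod.natCast_self n
      rw [h0, add_zero]
      rw [interval, if_pos rfl]
    · have hilt : i < n := by omega
      have hne : ((i : ℕ) : ZMod n) ≠ 0 := by
        intro h
        have := congrArg ZMod.val h
        rw [ZMod.val_natCast_of_lt hilt, ZMod.val_zero] at this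
        omega
      have hsr : r + ((i : ℕ) : ZMod n) ≠ r := by
        intro h
        apply hne
        have h' : r + ((i : ℕ) : ZMod n) = r + 0 := by rw [add_zero]; exact h
        exact add_left_cancel h'
      rw [interval, if_neg hsr, add_sub_cancel_left, ZMod.val_natCast_of_lt hilt]
  -- the key existence statement
  have key : ∀ v : Fin p, ∃ j : ZMod n,
      (a j = false ∧ QGood q (interval a r j)) ∧
      f (if j = r then n else (j - r).val) = (v : ℕ) + 1 := by
    intro v
    have hv1 : (1 : ℤ) ≤ ((v : ℕ) : ℤ) + 1 := by omega
    have hvn : ((v : ℕ) : ℤ) + 1 ≤ f n := by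
      rw [hfn]
      have := v.isLt
      exact_mod_cast (by omega : (v : ℕ) + 1 ≤ p)
    obtain ⟨j0, hj1, hj2, hfj, hincr⟩ := exists_last_crossing f n hf0 hstep _ hv1 hvn
    have hj0 : j0 - 1 + 1 = j0 := by omega
    have hstepj : f ((j0 - 1) + 1) = f (j0 - 1) + 1 := by rw [hj0]; omega
    have hgj : g (j0 - 1) = false := hfalse_of_incr _ hstepj
    refine ⟨r + ((j0 : ℕ) : ZMod n), ⟨?_, ?_⟩, ?_⟩
    · have h1 : g (j0 - 1) = a (r + ((j0 : ℕ) : ZMod n)) := by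
        rw [hg]
        simp only []
        rw [hj0]
      rw [← h1]; exact hgj
    · rw [hint j0 hj1 hj2, QGood]
      have h2 : f j0 = (c j0 : ℤ) - q * t j0 := by rw [hfdef]
      have h3 : ((q : ℤ) * t j0) < c j0 := by omega
      exact_mod_cast h3
    · by_cases hj : j0 = n
      · rw [hj] at hfj ⊢
        have h4 : ((n : ℕ) : ZMod n) = 0 := ZMod.natCast_self n
        rw [h4, add_zero, if_pos rfl]
        exact hfj
      · have hilt : j0 < n := by omega
        have hne : ((j0 : ℕ) : ZMod n) ≠ 0 := by
          intro h
          have := congrArg ZMod.val h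
          rw [ZMod.val_natCast_of_lt hilt, ZMod.val_zero] at this
          omega
        have hsr : r + ((j0 : ℕ) : ZMod n) ≠ r := by
          intro h
          apply hne
          have h' : r + ((j0 : ℕ) : ZMod n) = r + 0 := by rw [add_zero]; exact h
          exact add_left_cancel h'
        rw [if_neg hsr, add_sub_cancel_left, ZMod.val_natCast_of_lt hilt]
        exact hfj
  choose h hh using key
  have hinj : Function.Injective (fun v : Fin p =>
      (⟨h v, (hh v).1⟩ : {j : ZMod n // a j = false ∧ QGood q (interval a r j)})) := by
    intro v v' heq
    have h1 : h v = h v' := congrArg Subtype.val heq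
    have h2 := (hh v).2
    rw [h1] at h2
    have h3 := (hh v').2
    rw [h2] at h3
    have h5 : ((v : ℕ) : ℤ) = ((v' : ℕ) : ℤ) := by omega
    apply Fin.ext
    exact_mod_cast h5
  calc p = Nat.card (Fin p) := by simp
    _ ≤ Nat.card {j : ZMod n // a j = false ∧ QGood q (interval a r j)} :=
        Nat.card_le_card_of_injective _ hinj
    _ = Nat.card {j : ZMod n | a j = false ∧ QGood q (interval a r j)} := rfl


/-- Let `a` be a `(k, qk+p)`-arrangement with `p ≥ 1`. Then every 0-linearization of
`a` has at least `p` `q`-good 0-intervals: for every zero position `r` there are at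
least `p` zero positions `j` such that the interval `(r, j]` is `q`-good. -/
theorem every_zero_linearization_has_p_good (q k p : ℕ) (hp : 1 ≤ p)
    (a : ZMod ((q + 1) * k + p) → Bool)
    (hones : Nat.card {i : ZMod ((q + 1) * k + p) | a i = true} = k) :
    ∀ r : ZMod ((q + 1) * k + p), a r = false →
      p ≤ Nat.card {j : ZMod ((q + 1) * k + p) |
            a j = false ∧ QGood q (interval a r j)} := by
  classical
  intro r _
  haveI : NeZero ((q + 1) * k + p) := ⟨by omega⟩
  exact main_aux q k p _ hp rfl a hones r
end

section
/- Let q ≥ 0, k ≥ 0, p ≥ 1, and let a be a (k, qk+p)-arrangement. Then there are at least p zero positions r such that every 0-interval of the 0-linearization ending at r is q-good, i.e. for every j with a_j = 0 the interval (r,j] satisfies w_0((r,j]) > q·w_1((r,j]). -/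
namespace PLG

def wt (q : ℕ) {n : ℕ} (a : ZMod n → Bool) (i : ℕ) : ℤ :=
  if a ((i : ℕ) : ZMod n) then -(q : ℤ) else 1

def pre (q : ℕ) {n : ℕ} (a : ZMod n → Bool) (m : ℕ) : ℤ :=
  ∑ i ∈ Finset.range m, wt q a i

/-- prefix sum including position `m`. -/
def G (q : ℕ) {n : ℕ} (a : ZMod n → Bool) (m : ℕ) : ℤ := pre q a (m + 1)

def PP (q : ℕ) {n : ℕ} (a : ZMod n → Bool) (v : ℤ) (m : ℕ) : Prop :=
  a ((m : ℕ) : ZMod n) = false ∧ G q a m ≤ v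

instance (q : ℕ) {n : ℕ} (a : ZMod n → Bool) (v : ℤ) : DecidablePred (PP q a v) :=
  fun _ => inferInstanceAs (Decidable (_ ∧ _))

def BB (n : ℕ) (Cmin : ℤ) (m0 : ℕ) (v : ℤ) : ℕ := ((v - Cmin).toNat + 1) * n + m0

lemma list_weight (q : ℕ) (l : List Bool) :
    ((l.count false : ℤ) - q * l.count true) =
      (l.map (fun b => if b then -(q : ℤ) else 1)).sum := by
  induction l with
  | nil => simp
  | cons b l ih =>
    cases b <;> simp [List.count_cons] <;> push_cast <;> linarith

lemma sum_list_range {M : Type*} [AddCommMonoid M] (h : ℕ → M) (L : ℕ) :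
    ((List.range L).map h).sum = ∑ i ∈ Finset.range L, h i := by
  induction L with
  | zero => simp
  | succ L ih =>
    rw [List.range_succ, Finset.sum_range_succ, List.map_append, List.sum_append, ih]; simp

lemma pre_period {n : ℕ} [NeZero n] (q : ℕ) (a : ZMod n → Bool) (S : ℤ)
    (hsum : ∑ x : ZMod n, (if a x then -(q : ℤ) else 1) = S) (m : ℕ) :
    pre q a (m + n) = pre q a m + S := by
  have h1 : pre q a (m + n) - pre q a m = ∑ i ∈ Finset.Ico m (m + n), wt q a i :=
    (Finset.sum_Ico_eq_sub _ (Nat.le_add_right m n)).symm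
  rw [Finset.sum_Ico_eq_sum_range] at h1
  simp only [Nat.add_sub_cancel_left] at h1
  have h2 : ∑ i ∈ Finset.range n, wt q a (m + i)
      = ∑ x : ZMod n, (if a x then -(q : ℤ) else 1) := by
    apply Finset.sum_nbij' (i := fun i => ((m + i : ℕ) : ZMod n))
      (j := fun x => (x - (m : ZMod n)).val)
    · intro i _; exact Finset.mem_univ _
    · intro x _; exact Finset.mem_range.2 (ZMod.val_lt _)
    · intro i hi
      have : (((m + i : ℕ) : ZMod n) - (m : ZMod n)) = (i : ZMod n) := by
        push_cast; ring
      rw [this, ZMod.val_natCast_of_lt (Finset.mem_range.1 hi)]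
    · intro x _
      push_cast
      simp [ZMod.natCast_val, ZMod.cast_id]
    · intro i _; rfl
  omega

lemma pre_period_mul {n : ℕ} [NeZero n] (q : ℕ) (a : ZMod n → Bool) (S : ℤ)
    (hsum : ∑ x : ZMod n, (if a x then -(q : ℤ) else 1) = S) (m t : ℕ) :
    pre q a (m + t * n) = pre q a m + t * S := by
  induction t with
  | zero => simp
  | succ t ih =>
    have h := pre_period q a S hsum (m + t * n)
    push_cast
    push_cast at ih
    rw [show m + (t + 1) * n = m + t * n + n by ring, h, ih]; ring

lemma G_period {n : ℕ} [NeZero n] (q : ℕ) (a : ZMod n → Bool) (S : ℤ)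
    (hsum : ∑ x : ZMod n, (if a x then -(q : ℤ) else 1) = S) (m : ℕ) :
    G q a (m + n) = G q a m + S := by
  show pre q a (m + n + 1) = pre q a (m + 1) + S
  rw [show m + n + 1 = (m + 1) + n by ring]; exact pre_period q a S hsum _

lemma G_period_mul {n : ℕ} [NeZero n] (q : ℕ) (a : ZMod n → Bool) (S : ℤ)
    (hsum : ∑ x : ZMod n, (if a x then -(q : ℤ) else 1) = S) (m t : ℕ) :
    G q a (m + t * n) = G q a m + t * S := by
  show pre q a (m + t * n + 1) = pre q a (m + 1) + t * S
  rw [show m + t * n + 1 = (m + 1) + t * n by ring]; exact pre_period_mul q a S hsum _ _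

/-- the "next false position" lemma -/
lemma next_false {n : ℕ} [NeZero n] (q : ℕ) (a : ZMod n → Bool) (m : ℕ)
    (hm : a ((m : ℕ) : ZMod n) = false) (hn1 : 1 ≤ n) :
    ∃ z, m < z ∧ a ((z : ℕ) : ZMod n) = false ∧ G q a z ≤ G q a m + 1 := by
  have hexz : ∃ z, m < z ∧ a ((z : ℕ) : ZMod n) = false := by
    refine ⟨m + n, by omega, ?_⟩
    push_cast
    simpa [ZMod.natCast_self] using hm
  classical
  obtain ⟨hz1, hz2⟩ := Nat.find_spec hexz
  set z := Nat.find hexz with hzdef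
  refine ⟨z, hz1, hz2, ?_⟩
  have hmid : ∀ i, m < i → i < z → a ((i : ℕ) : ZMod n) = true := by
    intro i h1 h2
    by_contra hcon
    have hfa : a ((i : ℕ) : ZMod n) = false := by
      cases h : a ((i : ℕ) : ZMod n)
      · rfl
      · exact absurd h hcon
    exact Nat.find_min hexz h2 ⟨h1, hfa⟩
  have hsub : G q a z - G q a m = ∑ i ∈ Finset.Ico (m + 1) (z + 1), wt q a i := by
    show pre q a (z + 1) - pre q a (m + 1) = _
    rw [Finset.sum_Ico_eq_sub _ (by omega)]
    rfl
  have hsplit : ∑ i ∈ Finset.Ico (m + 1) (z + 1), wt q a i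
      = (∑ i ∈ Finset.Ico (m + 1) z, wt q a i) + wt q a z := by
    rw [Finset.sum_Ico_succ_top (by omega)]
  have h1 : ∑ i ∈ Finset.Ico (m + 1) z, wt q a i ≤ 0 := by
    apply Finset.sum_nonpos
    intro i hi
    rw [Finset.mem_Ico] at hi
    simp [wt, hmid i (by omega) hi.2]
  have h2 : wt q a z = 1 := by simp [wt, hz2]
  omega

end PLG

namespace PLG

theorem main (q k p : ℕ) (hp : 1 ≤ p) (n : ℕ) (hn : n = (q + 1) * k + p)
    (a : ZMod n → Bool)
    (hones : Nat.card {i : ZMod n | a i = true} = k) :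
    p ≤ Nat.card {r : ZMod n |
          a r = false ∧ ∀ j : ZMod n, a j = false →
            QGood q (interval a r j)} := by
  classical
  haveI : NeZero n := ⟨by omega⟩
  have hn1 : 1 ≤ n := by omega
  have hqk : (q + 1) * k = q * k + k := by ring
  have hk : (Finset.univ.filter (fun x : ZMod n => a x = true)).card = k := by
    rw [← hones, Nat.card_eq_fintype_card, Fintype.card_subtype]
    rfl
  have hkn : k ≤ n := by
    calc k = _ := hk.symm
    _ ≤ Finset.univ.card := Finset.card_filter_le _ _
    _ = n := by simp [ZMod.card]
  have hsum : ∑ x : ZMod n, (if a x then -(q : ℤ) else 1) = (p : ℤ) := by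
    rw [Finset.sum_ite, Finset.sum_const, Finset.sum_const]
    have hc : (Finset.univ.filter (fun x : ZMod n => ¬ a x = true)).card = n - k := by
      have := Finset.card_filter_add_card_filter_not
        (s := (Finset.univ : Finset (ZMod n))) (p := fun x : ZMod n => a x = true)
      simp only [Finset.card_univ, ZMod.card] at this
      omega
    rw [hk, hc]
    have h2 : (n - k : ℕ) = q * k + p := by omega
    rw [h2]
    simp only [nsmul_eq_mul, smul_eq_mul, mul_one]
    push_cast
    ring
  -- lower bound on G
  have hrne : (Finset.range n).Nonempty := ⟨0, Finset.mem_range.2 (by omega)⟩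
  obtain ⟨Cmin, hCmin⟩ : ∃ C : ℤ, C = (Finset.range n).inf' hrne (G q a) := ⟨_, rfl⟩
  have hGlow : ∀ m : ℕ, Cmin + (m / n : ℕ) * (p : ℤ) ≤ G q a m := by
    intro m
    have h1 : G q a m = G q a (m % n) + (m / n : ℕ) * (p : ℤ) := by
      conv_lhs => rw [show m = m % n + (m / n) * n from by rw [Nat.mod_add_div']]
      exact G_period_mul q a _ hsum _ _
    have h2 : Cmin ≤ G q a (m % n) := by
      rw [hCmin]
      exact Finset.inf'_le _ (Finset.mem_range.2 (Nat.mod_lt _ (by omega)))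
    linarith
  -- a false position
  have hex : ∃ x : ZMod n, a x = false := by
    by_contra h
    push_neg at h
    have hall : ∀ x : ZMod n, a x = true := by
      intro x
      cases hax : a x
      · exact absurd hax (h x)
      · rfl
    have : (Finset.univ.filter (fun x : ZMod n => a x = true)) = Finset.univ :=
      Finset.filter_true_of_mem (fun x _ => hall x)
    rw [this, Finset.card_univ, ZMod.card] at hk
    omega
  obtain ⟨x, hx⟩ := hex
  obtain ⟨m0, hm0⟩ : ∃ m : ℕ, m = x.val + n := ⟨_, rfl⟩
  have hAm0 : a ((m0 : ℕ) : ZMod n) = false := by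
    rw [hm0]
    push_cast
    simpa [ZMod.natCast_self, ZMod.natCast_val, ZMod.cast_id] using hx
  obtain ⟨v0, hv0⟩ : ∃ v : ℤ, v = G q a m0 := ⟨_, rfl⟩
  -- the bound works
  have hB : ∀ v : ℤ, ∀ m : ℕ, BB n Cmin m0 v < m → ¬ PP q a v m := by
    intro v m hm hPm
    have hmge : ((v - Cmin).toNat + 1) * n ≤ m := by
      have : BB n Cmin m0 v = ((v - Cmin).toNat + 1) * n + m0 := rfl
      omega
    have hdiv : (v - Cmin).toNat + 1 ≤ m / n := (Nat.le_div_iff_mul_le (by omega)).2 hmge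
    have h3 : ((v - Cmin).toNat + 1 : ℤ) ≤ ((m / n : ℕ) : ℤ) := by exact_mod_cast hdiv
    have h4 : (v - Cmin : ℤ) ≤ ((v - Cmin).toNat : ℤ) := Int.self_le_toNat _
    have h5 := hGlow m
    have hple : (1 : ℤ) ≤ (p : ℤ) := by exact_mod_cast hp
    have h6 : ((m / n : ℕ) : ℤ) ≤ ((m / n : ℕ) : ℤ) * (p : ℤ) := le_mul_of_one_le_right (by positivity) hple
    have : v < G q a m := by linarith
    exact absurd hPm.2 (by omega)
  have hm0B : ∀ v : ℤ, m0 ≤ BB n Cmin m0 v := fun v => Nat.le_add_left _ _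
  -- the selector
  obtain ⟨r, hr⟩ : ∃ r : ℕ → ℕ,
      r = fun t : ℕ => Nat.findGreatest (PP q a (v0 + (t : ℤ))) (BB n Cmin m0 (v0 + (t : ℤ))) := ⟨_, rfl⟩
  have hPm0 : ∀ t : ℕ, PP q a (v0 + t) m0 := by
    intro t
    refine ⟨hAm0, ?_⟩
    rw [hv0]
    have : (0 : ℤ) ≤ (t : ℤ) := by positivity
    omega
  have hrP : ∀ t : ℕ, PP q a (v0 + t) (r t) := by
    intro t
    rw [hr]
    exact Nat.findGreatest_spec (hm0B _) (hPm0 t)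
  have hm0r : ∀ t : ℕ, m0 ≤ r t := by
    intro t
    rw [hr]
    exact Nat.le_findGreatest (hm0B _) (hPm0 t)
  have hrgt : ∀ t : ℕ, ∀ m : ℕ, r t < m → a ((m : ℕ) : ZMod n) = false → v0 + t < G q a m := by
    intro t m hlt ha
    by_contra hcon
    push_neg at hcon
    have hPm : PP q a (v0 + t) m := ⟨ha, hcon⟩
    rcases le_or_gt m (BB n Cmin m0 (v0 + t)) with h | h
    · rw [hr] at hlt
      exact Nat.findGreatest_is_greatest hlt h hPm
    · exact hB _ _ h hPm
  -- strict monotonicity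
  have hrmono : ∀ t : ℕ, r t < r (t + 1) := by
    intro t
    have hle : r t ≤ r (t + 1) := by
      rw [hr]
      apply Nat.findGreatest_mono
      · intro m hm
        refine ⟨hm.1, ?_⟩
        have hGm := hm.2
        have : ((t : ℤ)) ≤ ((t + 1 : ℕ) : ℤ) := by push_cast; omega
        omega
      · unfold BB
        have h1 : (v0 + t - Cmin) ≤ (v0 + (t + 1 : ℕ) - Cmin) := by push_cast; omega
        have h2 := Int.toNat_le_toNat h1
        exact Nat.add_le_add_right (Nat.mul_le_mul_right _ (by omega)) _
    rcases lt_or_eq_of_le hle with h | h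
    · exact h
    · exfalso
      obtain ⟨z, hz1, hz2, hz3⟩ := next_false q a (r t) (hrP t).1 hn1
      have hgz := hrgt (t + 1) z (by omega) hz2
      have hG := (hrP t).2
      have : ((t + 1 : ℕ) : ℤ) = (t : ℤ) + 1 := by push_cast; ring
      omega
  have hrsm : StrictMono r := strictMono_nat_of_lt_succ hrmono
  -- window bound
  have hwin : ∀ t : ℕ, t < p → r t < r 0 + n := by
    intro t ht
    by_contra hcon
    push_neg at hcon
    obtain ⟨m, hm⟩ : ∃ m : ℕ, m = r t - n := ⟨_, rfl⟩
    have hm1 : r 0 ≤ m := by omega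
    have hm2 : m + n = r t := by omega
    have hAm : a ((m : ℕ) : ZMod n) = false := by
      have hcasteq : ((r t : ℕ) : ZMod n) = ((m : ℕ) : ZMod n) := by
        rw [← hm2]
        push_cast
        simp [ZMod.natCast_self]
      rw [← hcasteq]
      exact (hrP t).1
    have hGm : G q a m ≤ v0 - 1 := by
      have hper := G_period q a _ hsum m
      rw [hm2] at hper
      have h2 := (hrP t).2
      have h3 : (t : ℤ) ≤ (p : ℤ) - 1 := by
        have : (t : ℤ) < (p : ℤ) := by exact_mod_cast ht
        omega
      omega
    rcases lt_or_eq_of_le hm1 with hlt' | heq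
    · have := hrgt 0 m hlt' hAm
      simp only [Nat.cast_zero, add_zero] at this
      omega
    · obtain ⟨z, hz1, hz2, hz3⟩ := next_false q a (r 0) (hrP 0).1 hn1
      have hgz := hrgt 0 z hz1 hz2
      simp only [Nat.cast_zero, add_zero] at hgz
      rw [← heq] at hGm
      omega
  -- goodness
  have hgood : ∀ t : ℕ, t < p → ∀ j : ZMod n, a j = false →
      QGood q (interval a ((r t : ℕ) : ZMod n) j) := by
    intro t ht j hj
    obtain ⟨L, hLdef⟩ : ∃ L : ℕ, L = if j = ((r t : ℕ) : ZMod n) then n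
        else (j - ((r t : ℕ) : ZMod n)).val := ⟨_, rfl⟩
    have hL1 : 1 ≤ L := by
      rw [hLdef]
      split
      · omega
      · rename_i hne
        have h1 : j - ((r t : ℕ) : ZMod n) ≠ 0 := sub_ne_zero.2 hne
        have h2 : (j - ((r t : ℕ) : ZMod n)).val ≠ 0 := by
          intro h0
          exact h1 (ZMod.val_eq_zero _ |>.1 h0)
        omega
    have hLn : L ≤ n := by
      rw [hLdef]
      split
      · exact le_refl _
      · exact le_of_lt (ZMod.val_lt _)
    have hcast : ((r t + L : ℕ) : ZMod n) = j := by
      push_cast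
      rw [hLdef]
      split
      · rename_i h
        rw [h]
        simp [ZMod.natCast_self]
      · rw [ZMod.natCast_val, ZMod.cast_id]
        ring
    have h1 : (interval a ((r t : ℕ) : ZMod n) j)
        = (List.range L).map (fun i => a ((r t + 1 + i : ℕ) : ZMod n)) := by
      rw [interval, ← hLdef]
      congr 1
      funext i
      congr 1
      push_cast
      ring
    have h2 : ((interval a ((r t : ℕ) : ZMod n) j).count false : ℤ)
        - q * (interval a ((r t : ℕ) : ZMod n) j).count true
        = G q a (r t + L) - G q a (r t) := by
      rw [list_weight, h1, List.map_map, sum_list_range]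
      have hIco : G q a (r t + L) - G q a (r t)
          = ∑ i ∈ Finset.Ico (r t + 1) (r t + L + 1), wt q a i :=
        (Finset.sum_Ico_eq_sub (wt q a) (by omega : r t + 1 ≤ r t + L + 1)).symm
      rw [hIco, Finset.sum_Ico_eq_sum_range,
        show (r t + L + 1) - (r t + 1) = L from by omega]
      apply Finset.sum_congr rfl
      intro i _
      rfl
    have h3 : v0 + t < G q a (r t + L) := by
      apply hrgt t _ (by omega)
      rw [hcast]
      exact hj
    have h4 := (hrP t).2
    have h5 : 0 < ((interval a ((r t : ℕ) : ZMod n) j).count false : ℤ)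
        - q * (interval a ((r t : ℕ) : ZMod n) j).count true := by
      rw [h2]; omega
    unfold QGood
    zify
    linarith
  -- assemble the injection
  have hinjval : ∀ t t' : ℕ, t < t' → t' < p →
      ((r t : ℕ) : ZMod n) ≠ ((r t' : ℕ) : ZMod n) := by
    intro t t' htt' ht' heq
    have hmod := (ZMod.natCast_eq_natCast_iff _ _ _).1 heq
    have hlt : r t < r t' := hrsm htt'
    obtain ⟨c, hc⟩ := (Nat.modEq_iff_dvd' (le_of_lt hlt)).1 hmod
    have h0 : r 0 ≤ r t := hrsm.monotone (Nat.zero_le _)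
    have hwt' := hwin t' ht'
    have hcn : r t' - r t < n := by omega
    rcases Nat.eq_zero_or_pos c with h | h
    · rw [h, Nat.mul_zero] at hc; omega
    · have : n * 1 ≤ n * c := Nat.mul_le_mul_left _ h
      omega
  let S := {r : ZMod n | a r = false ∧ ∀ j : ZMod n, a j = false → QGood q (interval a r j)}
  have hmem : ∀ t : Fin p, ((r t.val : ℕ) : ZMod n) ∈ S :=
    fun t => ⟨(hrP t.val).1, hgood t.val t.isLt⟩
  have hinj : Function.Injective (fun t : Fin p => (⟨_, hmem t⟩ : S)) := by
    intro t t' h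
    simp only [Subtype.mk_eq_mk] at h
    by_contra hne
    have hne' : t.val ≠ t'.val := fun hh => hne (Fin.ext hh)
    rcases Nat.lt_or_ge t.val t'.val with hlt | hge
    · exact hinjval t.val t'.val hlt t'.isLt h
    · exact hinjval t'.val t.val (by omega) t.isLt h.symm
  calc p = Nat.card (Fin p) := by simp
  _ ≤ Nat.card S := Nat.card_le_card_of_injective _ hinj

end PLG


/-- Let `a` be a `(k, qk+p)`-arrangement with `p ≥ 1`. Then there are at least `p`
zero positions `r` such that every 0-interval of the 0-linearization ending at `r`
is `q`-good. -/
theorem p_linearizations_all_good (q k p : ℕ) (hp : 1 ≤ p)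
    (a : ZMod ((q + 1) * k + p) → Bool)
    (hones : Nat.card {i : ZMod ((q + 1) * k + p) | a i = true} = k) :
    p ≤ Nat.card {r : ZMod ((q + 1) * k + p) |
          a r = false ∧ ∀ j : ZMod ((q + 1) * k + p), a j = false →
            QGood q (interval a r j)} :=
  PLG.main q k p hp _ rfl a hones
end
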